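/- arXiv:gr-qc/9812064 — 4 statements merged into one kernel-verified Lean document; each statement's English description precedes it below -/
import Mathlib

section
/- Local existence at the event horizon (Lemma 1): Let Λ < 0, r_h > 0 and ω_h ∈ ℝ satisfy (ω_h² − 1)² < r_h²(1 − Λ r_h²). Then there exist ε > 0 and functions m, ω, S : [r_h, r_h + ε) → ℝ, continuous on [r_h, r_h + ε) and twice continuously differentiable on (r_h, r_h + ε), satisfying the field equations (E1)–(E3) on (r_h, r_h + ε), such that m(r_h) = r_h/2 − Λ r_h³/6, ω(r_h) = ω_h, S(r_h) = 1, N(r) > 0 for all r ∈ (r_h, r_h + ε), and ω is differentiable from the right at r_h with ω'(r_h) = (ω_h² − 1)ω_h / (r_h − Λ r_h³ − (ω_h² − 1)²/r_h). -/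
/-!
Take `u = ω'` as the unknown. Given `u`, the equation for `ω` is solved by integration and the
linear first-order equation that (E1) imposes on `N = 1 - 2m/r - Λr²/3` by variation of
constants with `N(rh) = 0`; `S` is an explicit exponential. Equation (E3) then becomes
`(r² N u)' = G(u)` for an explicit `G`, so `u` must be a fixed point of
`T u (r) = (∫_{rh}^r G(u)) / (r² N(u))(r)`. The regularity condition says exactly that
`(r² N)'(rh) = rh² N'(rh) > 0`, so `r² N ≈ rh² N'(rh) (r - rh)` near the horizon. Every quantity
built from `u` depends on `u` in a Lipschitz way that gains powers of `r - rh`, and this gain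
compensates the division by `r² N` in `T`: on `[rh, rh + ε]` the map `T` is a contraction with
constant `O(ε)`. By L'Hôpital, `T u (r)` tends to the prescribed value of `ω'(rh)` as `r → rh`,
so `T` maps a closed ball around this constant in `C([rh, rh + ε])` to itself, and Banach's fixed
point theorem applies.
-/

open Set Real Filter Topology

namespace EYMHorizon

noncomputable section

lemma abs_exp_sub_exp_le {x y M : ℝ} (hx : x ≤ M) (hy : y ≤ M) :
    |exp x - exp y| ≤ exp M * |x - y| :=
  (convex_Iic M).norm_image_sub_le_of_norm_deriv_le (fun _ _ => differentiableAt_exp)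
    (fun _ hz => by simpa using exp_le_exp.2 hz) hy hx

lemma abs_sq_sub_sq_le {x y M : ℝ} (hx : |x| ≤ M) (hy : |y| ≤ M) :
    |x ^ 2 - y ^ 2| ≤ 2 * M * |x - y| := by
  rw [sq_sub_sq, abs_mul]
  exact mul_le_mul_of_nonneg_right ((abs_add_le x y).trans (by linarith)) (abs_nonneg _)

lemma sq_le_sq_of_abs_le {x M : ℝ} (hx : |x| ≤ M) : x ^ 2 ≤ M ^ 2 :=
  sq_le_sq' (abs_le.1 hx).1 (abs_le.1 hx).2

lemma abs_cubic_le {x M : ℝ} (hx : |x| ≤ M) : |(x ^ 2 - 1) * x| ≤ (M ^ 2 + 1) * M := by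
  rw [abs_mul]
  refine mul_le_mul ((abs_sub _ _).trans ?_) hx (abs_nonneg _) (by positivity)
  rw [abs_one, abs_of_nonneg (sq_nonneg x)]
  linarith [sq_le_sq_of_abs_le hx]

lemma abs_cubic_sub_le {x y M : ℝ} (hx : |x| ≤ M) (hy : |y| ≤ M) :
    |(x ^ 2 - 1) * x - (y ^ 2 - 1) * y| ≤ (3 * M ^ 2 + 1) * |x - y| := by
  rw [show (x ^ 2 - 1) * x - (y ^ 2 - 1) * y = (x ^ 2 + x * y + y ^ 2 - 1) * (x - y) by ring,
    abs_mul]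
  have hxy : |x * y| ≤ M ^ 2 := by
    rw [abs_mul, sq]; exact mul_le_mul hx hy (abs_nonneg _) ((abs_nonneg _).trans hx)
  refine mul_le_mul_of_nonneg_right (abs_le.2 ⟨?_, ?_⟩) (abs_nonneg _) <;>
    linarith [abs_le.1 hxy, sq_nonneg x, sq_nonneg y, sq_nonneg M, sq_le_sq_of_abs_le hx,
      sq_le_sq_of_abs_le hy]

/-- The quotient estimate behind the contraction: numerators and denominators vanish to first
order in `t`, their variations to second order. -/
lemma abs_div_sub_div_le {I₁ I₂ Z₁ Z₂ c t A M L d : ℝ} (hc : 0 < c) (ht : 0 < t)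
    (hZ₁ : c * t ≤ Z₁) (hZ₂ : c * t ≤ Z₂) (hI : |I₁ - I₂| ≤ A * d * t ^ 2)
    (hI₂ : |I₂| ≤ M * t) (hZ : |Z₁ - Z₂| ≤ L * d * t ^ 2) :
    |I₁ / Z₁ - I₂ / Z₂| ≤ (A / c + M * L / c ^ 2) * d * t := by
  have hct : 0 < c * t := mul_pos hc ht
  have hZ₁0 : 0 < Z₁ := hct.trans_le hZ₁
  have hZ₂0 : 0 < Z₂ := hct.trans_le hZ₂
  rw [show I₁ / Z₁ - I₂ / Z₂ = (I₁ - I₂) / Z₁ + I₂ * (Z₂ - Z₁) / (Z₁ * Z₂) by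
    field_simp; ring]
  refine (abs_add_le _ _).trans ?_
  rw [abs_div, abs_div, abs_mul, abs_of_pos hZ₁0, abs_of_pos (mul_pos hZ₁0 hZ₂0), abs_sub_comm Z₂]
  have hAd : 0 ≤ A * d * t ^ 2 := (abs_nonneg _).trans hI
  have hMt : 0 ≤ M * t := (abs_nonneg _).trans hI₂
  have hLd : 0 ≤ L * d * t ^ 2 := (abs_nonneg _).trans hZ
  calc |I₁ - I₂| / Z₁ + |I₂| * |Z₁ - Z₂| / (Z₁ * Z₂)
      ≤ A * d * t ^ 2 / (c * t) + M * t * (L * d * t ^ 2) / (c * t * (c * t)) := by gcongr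
    _ = (A / c + M * L / c ^ 2) * d * t := by field_simp

lemma abs_intervalIntegral_le_mul {f : ℝ → ℝ} {a r C : ℝ} (hr : a ≤ r)
    (h : ∀ s ∈ Icc a r, |f s| ≤ C) : |∫ s in a..r, f s| ≤ C * (r - a) := by
  have := intervalIntegral.norm_integral_le_of_norm_le_const (a := a) (b := r) (f := f)
    fun s hs => h s (by rw [uIoc_of_le hr] at hs; exact Ioc_subset_Icc_self hs)
  rwa [abs_of_nonneg (sub_nonneg.2 hr)] at this

lemma continuous_of_hasDerivAt {f f' : ℝ → ℝ} (h : ∀ r, HasDerivAt f (f' r) r) : Continuous f :=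
  continuous_iff_continuousAt.2 fun r => (h r).continuousAt

lemma hasDerivAt_integral {f : ℝ → ℝ} (hf : Continuous f) (a r : ℝ) :
    HasDerivAt (fun r => ∫ s in a..r, f s) (f r) r :=
  (hf.integral_hasStrictDerivAt a r).hasDerivAt

lemma continuous_integral {f : ℝ → ℝ} (hf : Continuous f) (a : ℝ) :
    Continuous fun r => ∫ s in a..r, f s :=
  continuous_of_hasDerivAt (hasDerivAt_integral hf a)

lemma contDiffOn_succ_of_hasDerivAt {f f' : ℝ → ℝ} {s : Set ℝ} {n : ℕ} (hs : IsOpen s)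
    (hf : ∀ x ∈ s, HasDerivAt f (f' x) x) (hf' : ContDiffOn ℝ n f' s) :
    ContDiffOn ℝ (n + 1) f s := by
  rw [contDiffOn_succ_iff_deriv_of_isOpen hs]
  exact ⟨fun x hx => (hf x hx).differentiableAt.differentiableWithinAt, by simp,
    hf'.congr fun x hx => (hf x hx).deriv⟩

def uniformBall (c R : ℝ) : Set (ℝ → ℝ) := {u | Continuous u ∧ ∀ s, |u s - c| ≤ R}

lemma const_mem_uniformBall {c R : ℝ} (hR : 0 ≤ R) : (fun _ => c) ∈ uniformBall c R :=
  ⟨continuous_const, fun _ => by simpa using hR⟩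

lemma abs_le_of_mem_uniformBall {c R : ℝ} {u : ℝ → ℝ} (hu : u ∈ uniformBall c R) (s : ℝ) :
    |u s| ≤ |c| + R := by
  have := abs_sub_abs_le_abs_sub (u s) c
  linarith [hu.2 s]

/-- Banach's fixed point theorem in the closed ball of `C([a, b])`; functions on `ℝ` are
transported to `C([a, b])` by restriction and back by `IccExtend`. -/
theorem exists_fixedPoint_uniformBall {a b c R K : ℝ} (hab : a ≤ b) (hR : 0 ≤ R) (hK₀ : 0 ≤ K)
    (hK : K < 1) {T : (ℝ → ℝ) → ℝ → ℝ}
    (hcont : ∀ u ∈ uniformBall c R, ContinuousOn (T u) (Icc a b))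
    (hmaps : ∀ u ∈ uniformBall c R, ∀ r ∈ Icc a b, |T u r - c| ≤ R)
    (hlip : ∀ u₁ ∈ uniformBall c R, ∀ u₂ ∈ uniformBall c R, ∀ d,
      (∀ s ∈ Icc a b, |u₁ s - u₂ s| ≤ d) → ∀ r ∈ Icc a b, |T u₁ r - T u₂ r| ≤ K * d) :
    ∃ v ∈ uniformBall c R, ∀ r ∈ Icc a b, v r = T v r := by
  let S : Set C(Icc a b, ℝ) := {f | ∀ t, dist (f t) c ≤ R}
  have hS : IsClosed S := by
    simp only [S, ofPred_forall]
    exact isClosed_iInter fun t =>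
      isClosed_le ((continuous_eval_const t).dist continuous_const) continuous_const
  have hext : ∀ f ∈ S, IccExtend hab f ∈ uniformBall c R := fun f hf =>
    ⟨f.continuous.Icc_extend', fun s => by
      simpa [Real.dist_eq, IccExtend] using hf (projIcc a b hab s)⟩
  let TS : S → S := fun f =>
    ⟨⟨(Icc a b).domRestrict (T (IccExtend hab f)), (hcont _ (hext f f.2)).domRestrict⟩,
      fun t => by simpa [Real.dist_eq] using hmaps _ (hext f f.2) t t.2⟩
  have : Nonempty S := ⟨⟨ContinuousMap.const _ c, fun _ => by simpa using hR⟩⟩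
  have : CompleteSpace S := hS.completeSpace_coe
  have hTS : ContractingWith K.toNNReal TS := by
    refine ⟨by rwa [Real.toNNReal_lt_one], LipschitzWith.of_dist_le_mul fun f g => ?_⟩
    refine (ContinuousMap.dist_le (by positivity)).2 fun t => ?_
    rw [Real.dist_eq, Real.coe_toNNReal K hK₀]
    refine hlip _ (hext f f.2) _ (hext g g.2) _ (fun s hs => ?_) t t.2
    rw [IccExtend_of_mem hab _ hs, IccExtend_of_mem hab _ hs, ← Real.dist_eq]
    exact ContinuousMap.dist_apply_le_dist _
  set F := ContractingWith.fixedPoint TS hTS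
  refine ⟨IccExtend hab F, hext F F.2, fun r hr => ?_⟩
  have hfix := congrArg (fun G : S => G.1 ⟨r, hr⟩) hTS.fixedPoint_isFixedPt
  rw [IccExtend_of_mem hab _ hr, ← hfix]
  rfl

section Calculus

/-- At `r`, `F u` depends only on `u` restricted to `[a, r]`, Lipschitz with a gain of `k` powers
of `r - a`. -/
def LipschitzOrder (𝒰 : Set (ℝ → ℝ)) (a b : ℝ) (k : ℕ) (F : (ℝ → ℝ) → ℝ → ℝ) : Prop :=
  ∃ L, 0 ≤ L ∧ ∀ u₁ ∈ 𝒰, ∀ u₂ ∈ 𝒰, ∀ r ∈ Icc a b, ∀ d,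
    (∀ s ∈ Icc a r, |u₁ s - u₂ s| ≤ d) → |F u₁ r - F u₂ r| ≤ L * d * (r - a) ^ k

def BoundedOrder (𝒰 : Set (ℝ → ℝ)) (a b : ℝ) (k : ℕ) (F : (ℝ → ℝ) → ℝ → ℝ) : Prop :=
  ∃ M, 0 ≤ M ∧ ∀ u ∈ 𝒰, ∀ r ∈ Icc a b, |F u r| ≤ M * (r - a) ^ k

variable {𝒰 : Set (ℝ → ℝ)} {a b : ℝ} {i j k n : ℕ} {F G : (ℝ → ℝ) → ℝ → ℝ}

lemma pow_sub_le_pow_sub {r : ℝ} (hb : b ≤ a + 1) (hr : r ∈ Icc a b) (h : n ≤ k) :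
    (r - a) ^ k ≤ (r - a) ^ n :=
  pow_le_pow_of_le_one (by linarith [hr.1]) (by linarith [hr.2]) h

lemma BoundedOrder.mono (hb : b ≤ a + 1) (h : n ≤ k) (hF : BoundedOrder 𝒰 a b k F) :
    BoundedOrder 𝒰 a b n F := by
  obtain ⟨M, hM, hF⟩ := hF
  exact ⟨M, hM, fun u hu r hr =>
    (hF u hu r hr).trans (mul_le_mul_of_nonneg_left (pow_sub_le_pow_sub hb hr h) hM)⟩

lemma BoundedOrder.of_abs_le {M : ℝ} (hM : 0 ≤ M) (h : ∀ u ∈ 𝒰, ∀ r ∈ Icc a b, |F u r| ≤ M) :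
    BoundedOrder 𝒰 a b 0 F :=
  ⟨M, hM, fun u hu r hr => by simpa using h u hu r hr⟩

lemma lipschitzOrder_const (f : ℝ → ℝ) : LipschitzOrder 𝒰 a b k (fun _ r => f r) :=
  ⟨0, le_rfl, fun _ _ _ _ _ _ _ _ => by simp⟩

lemma lipschitzOrder_apply : LipschitzOrder 𝒰 a b 0 (fun u r => u r) :=
  ⟨1, zero_le_one, fun _ _ _ _ r hr _ hd => by simpa using hd r ⟨hr.1, le_rfl⟩⟩

lemma LipschitzOrder.add (hF : LipschitzOrder 𝒰 a b k F) (hG : LipschitzOrder 𝒰 a b k G) :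
    LipschitzOrder 𝒰 a b k (fun u r => F u r + G u r) := by
  obtain ⟨L, hL, hF⟩ := hF
  obtain ⟨L', hL', hG⟩ := hG
  refine ⟨L + L', by positivity, fun u₁ hu₁ u₂ hu₂ r hr d hd => ?_⟩
  calc |F u₁ r + G u₁ r - (F u₂ r + G u₂ r)|
      ≤ |F u₁ r - F u₂ r| + |G u₁ r - G u₂ r| := by
        rw [add_sub_add_comm]; exact abs_add_le _ _
    _ ≤ L * d * (r - a) ^ k + L' * d * (r - a) ^ k :=
        add_le_add (hF u₁ hu₁ u₂ hu₂ r hr d hd) (hG u₁ hu₁ u₂ hu₂ r hr d hd)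
    _ = (L + L') * d * (r - a) ^ k := by ring

lemma LipschitzOrder.sub (hF : LipschitzOrder 𝒰 a b k F) (hG : LipschitzOrder 𝒰 a b k G) :
    LipschitzOrder 𝒰 a b k (fun u r => F u r - G u r) := by
  obtain ⟨L, hL, hF⟩ := hF
  obtain ⟨L', hL', hG⟩ := hG
  refine ⟨L + L', by positivity, fun u₁ hu₁ u₂ hu₂ r hr d hd => ?_⟩
  calc |F u₁ r - G u₁ r - (F u₂ r - G u₂ r)|
      ≤ |F u₁ r - F u₂ r| + |G u₁ r - G u₂ r| := by
        rw [sub_sub_sub_comm]; exact abs_sub _ _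
    _ ≤ L * d * (r - a) ^ k + L' * d * (r - a) ^ k :=
        add_le_add (hF u₁ hu₁ u₂ hu₂ r hr d hd) (hG u₁ hu₁ u₂ hu₂ r hr d hd)
    _ = (L + L') * d * (r - a) ^ k := by ring

lemma BoundedOrder.sub (hF : BoundedOrder 𝒰 a b k F) (hG : BoundedOrder 𝒰 a b k G) :
    BoundedOrder 𝒰 a b k (fun u r => F u r - G u r) := by
  obtain ⟨M, hM, hF⟩ := hF
  obtain ⟨M', hM', hG⟩ := hG
  refine ⟨M + M', by positivity, fun u hu r hr => ?_⟩
  linarith [abs_sub (F u r) (G u r), hF u hu r hr, hG u hu r hr]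

lemma BoundedOrder.mul (hF : BoundedOrder 𝒰 a b i F) (hG : BoundedOrder 𝒰 a b j G) :
    BoundedOrder 𝒰 a b (i + j) (fun u r => F u r * G u r) := by
  obtain ⟨M, hM, hF⟩ := hF
  obtain ⟨M', hM', hG⟩ := hG
  refine ⟨M * M', by positivity, fun u hu r hr => ?_⟩
  rw [abs_mul, pow_add, mul_mul_mul_comm]
  exact mul_le_mul (hF u hu r hr) (hG u hu r hr) (abs_nonneg _)
    (by have := hr.1; have : 0 ≤ r - a := by linarith
        positivity)

lemma LipschitzOrder.mul (hF' : LipschitzOrder 𝒰 a b k F) (hG' : LipschitzOrder 𝒰 a b n G)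
    (hF : BoundedOrder 𝒰 a b i F) (hG : BoundedOrder 𝒰 a b j G) (hb : b ≤ a + 1) {m : ℕ}
    (hmi : m ≤ i + n) (hmj : m ≤ j + k) :
    LipschitzOrder 𝒰 a b m (fun u r => F u r * G u r) := by
  obtain ⟨M, hM, hF⟩ := hF
  obtain ⟨L, hL, hF'⟩ := hF'
  obtain ⟨M', hM', hG⟩ := hG
  obtain ⟨L', hL', hG'⟩ := hG'
  refine ⟨M * L' + L * M', by positivity, fun u₁ hu₁ u₂ hu₂ r hr d hd => ?_⟩
  have hd0 : 0 ≤ d := (abs_nonneg _).trans (hd r ⟨hr.1, le_rfl⟩)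
  have hra : 0 ≤ r - a := by linarith [hr.1]
  calc |F u₁ r * G u₁ r - F u₂ r * G u₂ r|
      = |F u₁ r * (G u₁ r - G u₂ r) + (F u₁ r - F u₂ r) * G u₂ r| := by ring_nf
    _ ≤ M * (r - a) ^ i * (L' * d * (r - a) ^ n) + L * d * (r - a) ^ k * (M' * (r - a) ^ j) := by
        refine (abs_add_le _ _).trans (add_le_add ?_ ?_) <;> rw [abs_mul]
        · exact mul_le_mul (hF u₁ hu₁ r hr) (hG' u₁ hu₁ u₂ hu₂ r hr d hd) (abs_nonneg _)
            (by positivity)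
        · exact mul_le_mul (hF' u₁ hu₁ u₂ hu₂ r hr d hd) (hG u₂ hu₂ r hr) (abs_nonneg _)
            (by positivity)
    _ = M * L' * d * (r - a) ^ (i + n) + L * M' * d * (r - a) ^ (j + k) := by ring
    _ ≤ M * L' * d * (r - a) ^ m + L * M' * d * (r - a) ^ m :=
        add_le_add (mul_le_mul_of_nonneg_left (pow_sub_le_pow_sub hb hr hmi) (by positivity))
          (mul_le_mul_of_nonneg_left (pow_sub_le_pow_sub hb hr hmj) (by positivity))
    _ = (M * L' + L * M') * d * (r - a) ^ m := by ring

lemma BoundedOrder.integral (hF : BoundedOrder 𝒰 a b k F) :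
    BoundedOrder 𝒰 a b (k + 1) (fun u r => ∫ s in a..r, F u s) := by
  obtain ⟨M, hM, hF⟩ := hF
  refine ⟨M, hM, fun u hu r hr => ?_⟩
  rw [pow_succ, ← mul_assoc]
  refine abs_intervalIntegral_le_mul hr.1 fun s hs => (hF u hu s ⟨hs.1, hs.2.trans hr.2⟩).trans ?_
  exact mul_le_mul_of_nonneg_left (pow_le_pow_left₀ (by linarith [hs.1]) (by linarith [hs.2]) k) hM

lemma LipschitzOrder.integral (hc : ∀ u ∈ 𝒰, Continuous (F u)) (hF : LipschitzOrder 𝒰 a b k F) :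
    LipschitzOrder 𝒰 a b (k + 1) (fun u r => ∫ s in a..r, F u s) := by
  obtain ⟨L, hL, hF⟩ := hF
  refine ⟨L, hL, fun u₁ hu₁ u₂ hu₂ r hr d hd => ?_⟩
  have hd0 : 0 ≤ d := (abs_nonneg _).trans (hd r ⟨hr.1, le_rfl⟩)
  rw [← intervalIntegral.integral_sub ((hc u₁ hu₁).intervalIntegrable _ _)
    ((hc u₂ hu₂).intervalIntegrable _ _), pow_succ, ← mul_assoc]
  refine abs_intervalIntegral_le_mul hr.1 fun s hs => ?_
  refine (hF u₁ hu₁ u₂ hu₂ s ⟨hs.1, hs.2.trans hr.2⟩ d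
    fun t ht => hd t ⟨ht.1, ht.2.trans hs.2⟩).trans ?_
  exact mul_le_mul_of_nonneg_left (pow_le_pow_left₀ (by linarith [hs.1]) (by linarith [hs.2]) k)
    (by positivity)

lemma LipschitzOrder.comp (φ : ℝ → ℝ → ℝ) {S : Set ℝ} {K : ℝ} (hK : 0 ≤ K)
    (hφ : ∀ r ∈ Icc a b, ∀ x ∈ S, ∀ y ∈ S, |φ r x - φ r y| ≤ K * |x - y|)
    (hS : ∀ u ∈ 𝒰, ∀ r ∈ Icc a b, F u r ∈ S) (hF : LipschitzOrder 𝒰 a b k F) :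
    LipschitzOrder 𝒰 a b k (fun u r => φ r (F u r)) := by
  obtain ⟨L, hL, hF⟩ := hF
  refine ⟨K * L, by positivity, fun u₁ hu₁ u₂ hu₂ r hr d hd => ?_⟩
  calc |φ r (F u₁ r) - φ r (F u₂ r)| ≤ K * |F u₁ r - F u₂ r| :=
        hφ r hr _ (hS u₁ hu₁ r hr) _ (hS u₂ hu₂ r hr)
    _ ≤ K * (L * d * (r - a) ^ k) := mul_le_mul_of_nonneg_left (hF u₁ hu₁ u₂ hu₂ r hr d hd) hK
    _ = K * L * d * (r - a) ^ k := by ring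

lemma LipschitzOrder.exists_contracting (hF : LipschitzOrder 𝒰 a b 1 F) :
    ∃ ε₀ > 0, ∀ ε ≤ ε₀, a + ε ≤ b → ∀ u₁ ∈ 𝒰, ∀ u₂ ∈ 𝒰, ∀ d,
      (∀ s ∈ Icc a (a + ε), |u₁ s - u₂ s| ≤ d) →
        ∀ r ∈ Icc a (a + ε), |F u₁ r - F u₂ r| ≤ 1 / 2 * d := by
  obtain ⟨L, hL, hF⟩ := hF
  refine ⟨1 / (2 * (L + 1)), by positivity, fun ε hε hεb u₁ hu₁ u₂ hu₂ d hd r hr => ?_⟩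
  have hd0 : 0 ≤ d := (abs_nonneg _).trans (hd a ⟨le_rfl, hr.1.trans hr.2⟩)
  have hrε : (L + 1) * (r - a) ≤ 1 / 2 := by
    calc (L + 1) * (r - a) ≤ (L + 1) * (1 / (2 * (L + 1))) := by
          gcongr; linarith [hr.2]
      _ = 1 / 2 := by field_simp
  refine (hF u₁ hu₁ u₂ hu₂ r ⟨hr.1, hr.2.trans hεb⟩ d fun s hs =>
    hd s ⟨hs.1, hs.2.trans hr.2⟩).trans ?_
  rw [pow_one]
  nlinarith [mul_nonneg hd0 (sub_nonneg.2 hr.1)]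

lemma LipschitzOrder.cubic {M : ℝ} (hM : ∀ u ∈ 𝒰, ∀ r ∈ Icc a b, |F u r| ≤ M)
    (hF : LipschitzOrder 𝒰 a b k F) :
    LipschitzOrder 𝒰 a b k (fun u r => (F u r ^ 2 - 1) * F u r) :=
  hF.comp (fun _ x => (x ^ 2 - 1) * x) (S := {x | |x| ≤ M}) (K := 3 * M ^ 2 + 1)
    (by positivity) (fun _ _ x hx y hy => abs_cubic_sub_le hx hy) hM

lemma BoundedOrder.cubic {M : ℝ} (hM₀ : 0 ≤ M) (hM : ∀ u ∈ 𝒰, ∀ r ∈ Icc a b, |F u r| ≤ M) :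
    BoundedOrder 𝒰 a b 0 (fun u r => (F u r ^ 2 - 1) * F u r) :=
  BoundedOrder.of_abs_le (by positivity) fun u hu r hr => abs_cubic_le (hM u hu r hr)

end Calculus

/-- Clamping the radius at `rh` makes every integrand below continuous on all of `ℝ`. -/
def clampRadius (rh s : ℝ) : ℝ := max s rh

/-- Substituting `N = 1 - 2m/r - Λr²/3` into (E1) gives the linear equation
`N' = nSource Λ r ω - (1 + 2ω'²) N / r`. -/
def nSource (Λ x w : ℝ) : ℝ := (1 - Λ * x ^ 2 - (w ^ 2 - 1) ^ 2 / x ^ 2) / x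

def horizonSlope (Λ rh ωh : ℝ) : ℝ :=
  (ωh ^ 2 - 1) * ωh / (rh - Λ * rh ^ 3 - (ωh ^ 2 - 1) ^ 2 / rh)

section Construction

variable (Λ rh ωh : ℝ) (u : ℝ → ℝ)

def omegaOf (r : ℝ) : ℝ := ωh + ∫ s in rh..r, u s

def dampingOf (s : ℝ) : ℝ := (1 + 2 * u s ^ 2) / clampRadius rh s

def dampingIntegralOf (r : ℝ) : ℝ := ∫ s in rh..r, dampingOf rh u s

def nIntegralOf (r : ℝ) : ℝ :=
  ∫ s in rh..r,
    exp (dampingIntegralOf rh u s) * nSource Λ (clampRadius rh s) (omegaOf rh ωh u s)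

def nOf (r : ℝ) : ℝ := exp (-dampingIntegralOf rh u r) * nIntegralOf Λ rh ωh u r

def massOf (r : ℝ) : ℝ := r / 2 * (1 - Λ * r ^ 2 / 3 - nOf Λ rh ωh u r)

def sOf (r : ℝ) : ℝ := exp (∫ s in rh..r, 2 * u s ^ 2 / clampRadius rh s)

def weightOf (r : ℝ) : ℝ := r ^ 2 * nOf Λ rh ωh u r

def weightDerivOf (r : ℝ) : ℝ :=
  2 * r * nOf Λ rh ωh u r + r ^ 2 *
    (nSource Λ (clampRadius rh r) (omegaOf rh ωh u r) - dampingOf rh u r * nOf Λ rh ωh u r)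

/-- By (E1), equation (E3) for `ω' = u` reads `(r² N u)' = sourceOf`. -/
def sourceOf (r : ℝ) : ℝ :=
  (omegaOf rh ωh u r ^ 2 - 1) * omegaOf rh ωh u r
    - 2 * clampRadius rh r * nOf Λ rh ωh u r * ((u r ^ 2 - 1) * u r)

def picardMap (r : ℝ) : ℝ :=
  if r ≤ rh then horizonSlope Λ rh ωh
  else (∫ s in rh..r, sourceOf Λ rh ωh u s) / weightOf Λ rh ωh u r

end Construction

section Derivatives

variable {Λ rh ωh : ℝ} {u : ℝ → ℝ}

lemma clampRadius_pos (hrh : 0 < rh) (s : ℝ) : 0 < clampRadius rh s :=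
  hrh.trans_le (le_max_right _ _)

lemma clampRadius_of_le {s : ℝ} (h : rh ≤ s) : clampRadius rh s = s := max_eq_left h

lemma continuous_clampRadius : Continuous (clampRadius rh) :=
  continuous_id.max continuous_const

lemma hasDerivAt_omegaOf (hu : Continuous u) (r : ℝ) :
    HasDerivAt (omegaOf rh ωh u) (u r) r :=
  (hasDerivAt_integral hu rh r).const_add ωh

lemma continuous_omegaOf (hu : Continuous u) : Continuous (omegaOf rh ωh u) :=
  continuous_of_hasDerivAt (hasDerivAt_omegaOf hu)

lemma continuous_dampingOf (hrh : 0 < rh) (hu : Continuous u) : Continuous (dampingOf rh u) :=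
  (by fun_prop : Continuous fun s => 1 + 2 * u s ^ 2).div continuous_clampRadius
    fun s => (clampRadius_pos hrh s).ne'

lemma continuous_sIntegrand (hrh : 0 < rh) (hu : Continuous u) :
    Continuous fun s => 2 * u s ^ 2 / clampRadius rh s :=
  (by fun_prop : Continuous fun s => 2 * u s ^ 2).div continuous_clampRadius
    fun s => (clampRadius_pos hrh s).ne'

lemma hasDerivAt_dampingIntegralOf (hrh : 0 < rh) (hu : Continuous u) (r : ℝ) :
    HasDerivAt (dampingIntegralOf rh u) (dampingOf rh u r) r :=
  hasDerivAt_integral (continuous_dampingOf hrh hu) rh r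

lemma continuous_nSource_comp (hrh : 0 < rh) (hu : Continuous u) :
    Continuous fun s => nSource Λ (clampRadius rh s) (omegaOf rh ωh u s) := by
  have hρ := continuous_clampRadius (rh := rh)
  have hω := continuous_omegaOf (rh := rh) (ωh := ωh) hu
  have hρ0 := fun s => (clampRadius_pos hrh s).ne'
  exact ((continuous_const.sub (by fun_prop)).sub ((by fun_prop : Continuous fun s =>
    (omegaOf rh ωh u s ^ 2 - 1) ^ 2).div (by fun_prop) fun s => pow_ne_zero 2 (hρ0 s))).div hρ hρ0

lemma continuous_nIntegrand (hrh : 0 < rh) (hu : Continuous u) :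
    Continuous fun s =>
      exp (dampingIntegralOf rh u s) * nSource Λ (clampRadius rh s) (omegaOf rh ωh u s) :=
  (continuous_of_hasDerivAt (hasDerivAt_dampingIntegralOf hrh hu)).rexp.mul
    (continuous_nSource_comp hrh hu)

lemma hasDerivAt_nOf (hrh : 0 < rh) (hu : Continuous u) (r : ℝ) :
    HasDerivAt (nOf Λ rh ωh u) (nSource Λ (clampRadius rh r) (omegaOf rh ωh u r)
      - dampingOf rh u r * nOf Λ rh ωh u r) r := by
  have hP := (hasDerivAt_dampingIntegralOf hrh hu r).neg.exp
  have hQ := hasDerivAt_integral (continuous_nIntegrand (Λ := Λ) (ωh := ωh) hrh hu) rh r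
  refine (hP.mul hQ).congr_deriv ?_
  simp only [nOf, nIntegralOf, Pi.neg_apply, exp_neg]
  field_simp
  ring

lemma continuous_nOf (hrh : 0 < rh) (hu : Continuous u) : Continuous (nOf Λ rh ωh u) :=
  continuous_of_hasDerivAt (hasDerivAt_nOf hrh hu)

lemma hasDerivAt_weightOf (hrh : 0 < rh) (hu : Continuous u) (r : ℝ) :
    HasDerivAt (weightOf Λ rh ωh u) (weightDerivOf Λ rh ωh u r) r :=
  ((hasDerivAt_pow 2 r).mul (hasDerivAt_nOf hrh hu r)).congr_deriv
    (by simp only [weightDerivOf]; ring)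

lemma continuous_weightOf (hrh : 0 < rh) (hu : Continuous u) : Continuous (weightOf Λ rh ωh u) :=
  continuous_of_hasDerivAt (hasDerivAt_weightOf hrh hu)

lemma continuous_weightDerivOf (hrh : 0 < rh) (hu : Continuous u) :
    Continuous (weightDerivOf Λ rh ωh u) := by
  have := continuous_nOf (Λ := Λ) (ωh := ωh) hrh hu
  have := continuous_nSource_comp (Λ := Λ) (ωh := ωh) hrh hu
  have := continuous_dampingOf hrh hu
  unfold weightDerivOf
  fun_prop

lemma continuous_sourceOf (hrh : 0 < rh) (hu : Continuous u) :
    Continuous (sourceOf Λ rh ωh u) := by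
  have := continuous_clampRadius (rh := rh)
  have := continuous_nOf (Λ := Λ) (ωh := ωh) hrh hu
  have := continuous_omegaOf (rh := rh) (ωh := ωh) hu
  unfold sourceOf
  fun_prop

@[simp] lemma omegaOf_rh : omegaOf rh ωh u rh = ωh := by simp [omegaOf]

@[simp] lemma nOf_rh : nOf Λ rh ωh u rh = 0 := by simp [nOf, nIntegralOf]

lemma massOf_rh : massOf Λ rh ωh u rh = rh / 2 - Λ * rh ^ 3 / 6 := by
  simp only [massOf, nOf_rh]; ring

@[simp] lemma sOf_rh : sOf rh u rh = 1 := by simp [sOf]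

@[simp] lemma weightOf_rh : weightOf Λ rh ωh u rh = 0 := by simp [weightOf]

lemma picardMap_of_le {r : ℝ} (hr : r ≤ rh) : picardMap Λ rh ωh u r = horizonSlope Λ rh ωh :=
  if_pos hr

lemma picardMap_of_lt {r : ℝ} (hr : rh < r) :
    picardMap Λ rh ωh u r = (∫ s in rh..r, sourceOf Λ rh ωh u s) / weightOf Λ rh ωh u r :=
  if_neg hr.not_ge

lemma nSource_pos (hrh : 0 < rh)
    (hreg : (ωh ^ 2 - 1) ^ 2 < rh ^ 2 * (1 - Λ * rh ^ 2)) : 0 < nSource Λ rh ωh := by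
  refine div_pos ?_ hrh
  rw [sub_pos, div_lt_iff₀ (by positivity)]
  linarith

lemma horizonSlope_eq (hrh : 0 < rh) :
    horizonSlope Λ rh ωh = (ωh ^ 2 - 1) * ωh / (rh ^ 2 * nSource Λ rh ωh) := by
  unfold horizonSlope nSource
  congr 1
  field_simp

lemma tendsto_picardMap (hrh : 0 < rh) (hκ : 0 < nSource Λ rh ωh)
    (hu : Continuous u) :
    Tendsto (picardMap Λ rh ωh u) (𝓝[>] rh) (𝓝 (horizonSlope Λ rh ωh)) := by
  have hZ' : weightDerivOf Λ rh ωh u rh = rh ^ 2 * nSource Λ rh ωh := by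
    simp [weightDerivOf, clampRadius_of_le le_rfl]
  have hne : weightDerivOf Λ rh ωh u rh ≠ 0 := by rw [hZ']; positivity
  have hG := continuous_sourceOf (Λ := Λ) (ωh := ωh) hrh hu
  have hZ'c := continuous_weightDerivOf (Λ := Λ) (ωh := ωh) hrh hu
  have hlim := HasDerivAt.lhopital_zero_nhdsGT
    (Eventually.of_forall fun r => hasDerivAt_integral hG rh r)
    (Eventually.of_forall fun r => hasDerivAt_weightOf hrh hu r)
    (nhdsWithin_le_nhds (hZ'c.continuousAt.eventually_ne hne))
    (by simpa using ((continuous_integral hG rh).tendsto rh).mono_left nhdsWithin_le_nhds)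
    (by simpa using ((continuous_weightOf hrh hu).tendsto rh).mono_left nhdsWithin_le_nhds)
    ((hG.continuousAt.div hZ'c.continuousAt hne).tendsto.mono_left nhdsWithin_le_nhds)
  rw [Pi.div_apply, hZ', show sourceOf Λ rh ωh u rh = (ωh ^ 2 - 1) * ωh by simp [sourceOf],
    ← horizonSlope_eq hrh] at hlim
  exact hlim.congr' (eventually_nhdsWithin_of_forall fun r hr => (picardMap_of_lt hr).symm)

lemma continuousWithinAt_picardMap_horizon (hrh : 0 < rh) (hκ : 0 < nSource Λ rh ωh)
    (hu : Continuous u) : ContinuousWithinAt (picardMap Λ rh ωh u) (Ici rh) rh := by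
  refine continuousWithinAt_Ioi_iff_Ici.1 ?_
  rw [ContinuousWithinAt, picardMap_of_le le_rfl]
  exact tendsto_picardMap hrh hκ hu

lemma continuousAt_picardMap (hrh : 0 < rh) (hu : Continuous u) {r : ℝ} (hr : rh < r)
    (hZ : weightOf Λ rh ωh u r ≠ 0) : ContinuousAt (picardMap Λ rh ωh u) r := by
  have hT : ContinuousAt (fun r => (∫ s in rh..r, sourceOf Λ rh ωh u s) / weightOf Λ rh ωh u r) r :=
    (continuous_integral (continuous_sourceOf hrh hu) rh).continuousAt.div
      (continuous_weightOf hrh hu).continuousAt hZ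
  refine hT.congr ?_
  filter_upwards [Ioi_mem_nhds hr] with x hx using (picardMap_of_lt hx).symm

end Derivatives

lemma abs_nSource_sub_le {Λ rh x w₁ w₂ W : ℝ} (hrh : 0 < rh) (hx : rh ≤ x) (hw₁ : |w₁| ≤ W)
    (hw₂ : |w₂| ≤ W) :
    |nSource Λ x w₁ - nSource Λ x w₂| ≤ 4 * W * (W ^ 2 + 1) / rh ^ 3 * |w₁ - w₂| := by
  have hx0 : 0 < x := hrh.trans_le hx
  have hW : 0 ≤ W := (abs_nonneg _).trans hw₁
  rw [show nSource Λ x w₁ - nSource Λ x w₂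
      = (w₂ ^ 2 - w₁ ^ 2) * (w₁ ^ 2 + w₂ ^ 2 - 2) / x ^ 3 by
    unfold nSource; field_simp; ring, abs_div, abs_mul, abs_of_pos (by positivity : 0 < x ^ 3)]
  have h₁ : |w₂ ^ 2 - w₁ ^ 2| ≤ 2 * W * |w₁ - w₂| := by
    rw [abs_sub_comm w₁]; exact abs_sq_sub_sq_le hw₂ hw₁
  have h₂ : |w₁ ^ 2 + w₂ ^ 2 - 2| ≤ 2 * (W ^ 2 + 1) := by
    have := sq_le_sq_of_abs_le hw₁
    have := sq_le_sq_of_abs_le hw₂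
    exact abs_le.2 ⟨by nlinarith [sq_nonneg w₁, sq_nonneg w₂], by nlinarith⟩
  calc |w₂ ^ 2 - w₁ ^ 2| * |w₁ ^ 2 + w₂ ^ 2 - 2| / x ^ 3
      ≤ 2 * W * |w₁ - w₂| * (2 * (W ^ 2 + 1)) / rh ^ 3 := by gcongr
    _ = 4 * W * (W ^ 2 + 1) / rh ^ 3 * |w₁ - w₂| := by ring

/-- Here `w` ranges over the values that `ω` can take on `[rh, rh + δ]` when `ω(rh) = ωh` and
`|ω'| ≤ |horizonSlope| + 1`. -/
def NSourceBand (Λ rh ωh δ : ℝ) : Prop :=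
  ∀ x ∈ Icc rh (rh + δ), ∀ w, |w - ωh| ≤ (|horizonSlope Λ rh ωh| + 1) * δ →
    |nSource Λ x w - nSource Λ rh ωh| ≤ nSource Λ rh ωh / 2

section Estimates

variable {Λ rh ωh δ : ℝ} {u : ℝ → ℝ}

local notation "𝒰" => uniformBall (horizonSlope Λ rh ωh) 1

lemma abs_omegaOf_sub_le (hu : u ∈ 𝒰) {r : ℝ} (hr : rh ≤ r) :
    |omegaOf rh ωh u r - ωh| ≤ (|horizonSlope Λ rh ωh| + 1) * (r - rh) := by
  simpa [omegaOf] using abs_intervalIntegral_le_mul hr fun s _ => abs_le_of_mem_uniformBall hu s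

lemma abs_omegaOf_le (hδ : δ ≤ 1) (hu : u ∈ 𝒰) {r : ℝ} (hr : r ∈ Icc rh (rh + δ)) :
    |omegaOf rh ωh u r| ≤ |ωh| + (|horizonSlope Λ rh ωh| + 1) := by
  have := abs_omegaOf_sub_le hu hr.1
  have := abs_sub_abs_le_abs_sub (omegaOf rh ωh u r) ωh
  nlinarith [hr.2, abs_nonneg (horizonSlope Λ rh ωh)]

lemma lipschitzOrder_omegaOf {b : ℝ} : LipschitzOrder 𝒰 rh b 1 (omegaOf rh ωh) :=
  (lipschitzOrder_const fun _ => ωh).add (lipschitzOrder_apply.integral fun _ hu => hu.1)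

lemma abs_nSource_comp_sub_le (hband : NSourceBand Λ rh ωh δ) (hu : u ∈ 𝒰) {r : ℝ}
    (hr : r ∈ Icc rh (rh + δ)) :
    |nSource Λ (clampRadius rh r) (omegaOf rh ωh u r) - nSource Λ rh ωh|
      ≤ nSource Λ rh ωh / 2 := by
  rw [clampRadius_of_le hr.1]
  exact hband r hr _ ((abs_omegaOf_sub_le hu hr.1).trans
    (mul_le_mul_of_nonneg_left (by linarith [hr.2]) (by positivity)))

lemma boundedOrder_nSource_comp (hband : NSourceBand Λ rh ωh δ)
    (hκ : 0 < nSource Λ rh ωh) :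
    BoundedOrder 𝒰 rh (rh + δ) 0
      (fun u r => nSource Λ (clampRadius rh r) (omegaOf rh ωh u r)) :=
  BoundedOrder.of_abs_le (M := 3 / 2 * nSource Λ rh ωh) (by positivity) fun u hu r hr => by
    have := abs_le.1 (abs_nSource_comp_sub_le hband hu hr)
    exact abs_le.2 ⟨by linarith, by linarith⟩

lemma lipschitzOrder_nSource_comp (hrh : 0 < rh) (hδ : δ ≤ 1) :
    LipschitzOrder 𝒰 rh (rh + δ) 1
      (fun u r => nSource Λ (clampRadius rh r) (omegaOf rh ωh u r)) :=
  lipschitzOrder_omegaOf.comp (fun r x => nSource Λ (clampRadius rh r) x) (by positivity)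
    (fun r _ x hx y hy => abs_nSource_sub_le hrh (le_max_right _ _) hx hy)
    (S := {x | |x| ≤ |ωh| + (|horizonSlope Λ rh ωh| + 1)})
    fun u hu r hr => abs_omegaOf_le hδ hu hr

lemma dampingOf_nonneg (hrh : 0 < rh) (s : ℝ) : 0 ≤ dampingOf rh u s :=
  div_nonneg (by positivity) (clampRadius_pos hrh s).le

lemma boundedOrder_dampingOf (hrh : 0 < rh) {b : ℝ} : BoundedOrder 𝒰 rh b 0 (dampingOf rh) := by
  refine BoundedOrder.of_abs_le (M := (1 + 2 * (|horizonSlope Λ rh ωh| + 1) ^ 2) / rh)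
    (by positivity) fun u hu r _ => ?_
  rw [abs_of_nonneg (dampingOf_nonneg hrh r)]
  refine div_le_div₀ (by positivity) ?_ hrh (le_max_right _ _)
  linarith [sq_le_sq_of_abs_le (abs_le_of_mem_uniformBall hu r)]

lemma lipschitzOrder_dampingOf (hrh : 0 < rh) {b : ℝ} :
    LipschitzOrder 𝒰 rh b 0 (dampingOf rh) := by
  refine lipschitzOrder_apply.comp (fun r x => (1 + 2 * x ^ 2) / clampRadius rh r)
    (S := {x | |x| ≤ |horizonSlope Λ rh ωh| + 1}) (K := 4 * (|horizonSlope Λ rh ωh| + 1) / rh)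
    (by positivity) (fun r _ x hx y hy => ?_) fun u hu r _ => abs_le_of_mem_uniformBall hu r
  have hρ := clampRadius_pos hrh r
  rw [← sub_div, abs_div, abs_of_pos hρ, show 1 + 2 * x ^ 2 - (1 + 2 * y ^ 2) = 2 * (x ^ 2 - y ^ 2)
    by ring, abs_mul, abs_two, div_le_iff₀ hρ]
  calc 2 * |x ^ 2 - y ^ 2| ≤ 2 * (2 * (|horizonSlope Λ rh ωh| + 1) * |x - y|) := by
        gcongr; exact abs_sq_sub_sq_le hx hy
    _ = 4 * (|horizonSlope Λ rh ωh| + 1) / rh * |x - y| * rh := by field_simp; ring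
    _ ≤ 4 * (|horizonSlope Λ rh ωh| + 1) / rh * |x - y| * clampRadius rh r := by
        gcongr; exact le_max_right _ _

lemma dampingIntegralOf_nonneg (hrh : 0 < rh) {r : ℝ} (hr : rh ≤ r) :
    0 ≤ dampingIntegralOf rh u r :=
  intervalIntegral.integral_nonneg hr fun s _ => dampingOf_nonneg hrh s

lemma exists_dampingIntegralOf_le (hrh : 0 < rh) (hδ : δ ≤ 1) :
    ∃ M, ∀ u ∈ 𝒰, ∀ r ∈ Icc rh (rh + δ), dampingIntegralOf rh u r ≤ M := by
  obtain ⟨M, -, h⟩ := ((boundedOrder_dampingOf (Λ := Λ) (ωh := ωh) hrh).integral).mono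
    (by linarith : rh + δ ≤ rh + 1) (Nat.zero_le _)
  exact ⟨M, fun u hu r hr => (le_abs_self _).trans (by simpa [dampingIntegralOf] using h u hu r hr)⟩

lemma lipschitzOrder_dampingIntegralOf (hrh : 0 < rh) {b : ℝ} :
    LipschitzOrder 𝒰 rh b 1 (dampingIntegralOf rh) :=
  (lipschitzOrder_dampingOf hrh).integral fun _ hu => continuous_dampingOf hrh hu.1

lemma boundedOrder_exp_dampingIntegralOf (hrh : 0 < rh) (hδ : δ ≤ 1) :
    BoundedOrder 𝒰 rh (rh + δ) 0 (fun u r => exp (dampingIntegralOf rh u r)) := by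
  obtain ⟨M, hP⟩ := exists_dampingIntegralOf_le (Λ := Λ) (ωh := ωh) hrh hδ
  exact BoundedOrder.of_abs_le (exp_pos M).le fun u hu r hr => by
    rw [abs_of_pos (exp_pos _)]; exact exp_le_exp.2 (hP u hu r hr)

lemma lipschitzOrder_exp_dampingIntegralOf (hrh : 0 < rh) (hδ : δ ≤ 1) :
    LipschitzOrder 𝒰 rh (rh + δ) 1 (fun u r => exp (dampingIntegralOf rh u r)) := by
  obtain ⟨M, hP⟩ := exists_dampingIntegralOf_le (Λ := Λ) (ωh := ωh) hrh hδ
  exact (lipschitzOrder_dampingIntegralOf hrh).comp (fun _ x => exp x) (S := Iic M)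
    (exp_pos M).le (fun _ _ x hx y hy => abs_exp_sub_exp_le hx hy) hP

lemma boundedOrder_exp_neg_dampingIntegralOf (hrh : 0 < rh) :
    BoundedOrder 𝒰 rh (rh + δ) 0 (fun u r => exp (-dampingIntegralOf rh u r)) :=
  BoundedOrder.of_abs_le zero_le_one fun _ _ r hr => by
    rw [abs_of_pos (exp_pos _), exp_le_one_iff, neg_nonpos]
    exact dampingIntegralOf_nonneg hrh hr.1

lemma lipschitzOrder_exp_neg_dampingIntegralOf (hrh : 0 < rh) :
    LipschitzOrder 𝒰 rh (rh + δ) 1 (fun u r => exp (-dampingIntegralOf rh u r)) :=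
  (lipschitzOrder_dampingIntegralOf hrh).comp (fun _ x => exp (-x)) (S := Ici 0) zero_le_one
    (fun _ _ x hx y hy => by
      simpa [neg_add_eq_sub, abs_sub_comm x] using
        abs_exp_sub_exp_le (neg_nonpos.2 hx) (neg_nonpos.2 hy))
    fun _ _ r hr => dampingIntegralOf_nonneg hrh hr.1

lemma boundedOrder_nIntegralOf (hrh : 0 < rh) (hδ : δ ≤ 1) (hband : NSourceBand Λ rh ωh δ)
    (hκ : 0 < nSource Λ rh ωh) :
    BoundedOrder 𝒰 rh (rh + δ) 1 (nIntegralOf Λ rh ωh) :=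
  ((boundedOrder_exp_dampingIntegralOf hrh hδ).mul
    (boundedOrder_nSource_comp hband hκ)).integral

lemma lipschitzOrder_nIntegralOf (hrh : 0 < rh) (hδ : δ ≤ 1) (hband : NSourceBand Λ rh ωh δ)
    (hκ : 0 < nSource Λ rh ωh) :
    LipschitzOrder 𝒰 rh (rh + δ) 2 (nIntegralOf Λ rh ωh) :=
  ((lipschitzOrder_exp_dampingIntegralOf hrh hδ).mul (lipschitzOrder_nSource_comp hrh hδ)
    (boundedOrder_exp_dampingIntegralOf hrh hδ) (boundedOrder_nSource_comp hband hκ)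
    (by linarith) le_rfl le_rfl).integral fun _ hu => continuous_nIntegrand hrh hu.1

lemma boundedOrder_nOf (hrh : 0 < rh) (hδ : δ ≤ 1) (hband : NSourceBand Λ rh ωh δ)
    (hκ : 0 < nSource Λ rh ωh) :
    BoundedOrder 𝒰 rh (rh + δ) 1 (nOf Λ rh ωh) :=
  (boundedOrder_exp_neg_dampingIntegralOf hrh).mul (boundedOrder_nIntegralOf hrh hδ hband hκ)

lemma lipschitzOrder_nOf (hrh : 0 < rh) (hδ : δ ≤ 1) (hband : NSourceBand Λ rh ωh δ)
    (hκ : 0 < nSource Λ rh ωh) :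
    LipschitzOrder 𝒰 rh (rh + δ) 2 (nOf Λ rh ωh) :=
  (lipschitzOrder_exp_neg_dampingIntegralOf hrh).mul (lipschitzOrder_nIntegralOf hrh hδ hband hκ)
    (boundedOrder_exp_neg_dampingIntegralOf hrh) (boundedOrder_nIntegralOf hrh hδ hband hκ)
    (by linarith) le_rfl le_rfl

lemma exists_mul_le_nOf (hrh : 0 < rh) (hδ : δ ≤ 1) (hband : NSourceBand Λ rh ωh δ)
    (hκ : 0 < nSource Λ rh ωh) :
    ∃ c, 0 < c ∧ ∀ u ∈ 𝒰, ∀ r ∈ Icc rh (rh + δ), c * (r - rh) ≤ nOf Λ rh ωh u r := by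
  obtain ⟨M, hP⟩ := exists_dampingIntegralOf_le (Λ := Λ) (ωh := ωh) hrh hδ
  refine ⟨exp (-M) * (nSource Λ rh ωh / 2), by positivity, fun u hu r hr => ?_⟩
  have hQ : nSource Λ rh ωh / 2 * (r - rh) ≤ nIntegralOf Λ rh ωh u r := by
    have : ∫ _ in rh..r, nSource Λ rh ωh / 2 ≤ nIntegralOf Λ rh ωh u r :=
      intervalIntegral.integral_mono_on hr.1 intervalIntegrable_const
        ((continuous_nIntegrand hrh hu.1).intervalIntegrable _ _) fun s hs => by
          have hq := (abs_le.1 (abs_nSource_comp_sub_le hband hu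
            (⟨hs.1, hs.2.trans hr.2⟩ : s ∈ Icc rh (rh + δ)))).1
          exact (by linarith : nSource Λ rh ωh / 2 ≤ nSource Λ (clampRadius rh s)
            (omegaOf rh ωh u s)).trans (le_mul_of_one_le_left
              (by linarith) (one_le_exp (dampingIntegralOf_nonneg hrh hs.1)))
    rwa [intervalIntegral.integral_const, smul_eq_mul, mul_comm] at this
  calc exp (-M) * (nSource Λ rh ωh / 2) * (r - rh)
      ≤ exp (-M) * nIntegralOf Λ rh ωh u r := by
        rw [mul_assoc]; exact mul_le_mul_of_nonneg_left hQ (exp_pos _).le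
    _ ≤ nOf Λ rh ωh u r :=
        mul_le_mul_of_nonneg_right (exp_le_exp.2 (neg_le_neg (hP u hu r hr)))
          ((by nlinarith [hr.1] : (0 : ℝ) ≤ _).trans hQ)

lemma exists_mul_le_weightOf (hrh : 0 < rh) (hδ : δ ≤ 1) (hband : NSourceBand Λ rh ωh δ)
    (hκ : 0 < nSource Λ rh ωh) :
    ∃ c, 0 < c ∧ ∀ u ∈ 𝒰, ∀ r ∈ Icc rh (rh + δ), c * (r - rh) ≤ weightOf Λ rh ωh u r := by
  obtain ⟨c, hc, hN⟩ := exists_mul_le_nOf hrh hδ hband hκ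
  refine ⟨rh ^ 2 * c, by positivity, fun u hu r hr => ?_⟩
  rw [mul_assoc]
  exact mul_le_mul (pow_le_pow_left₀ hrh.le hr.1 2) (hN u hu r hr)
    (mul_nonneg hc.le (by linarith [hr.1])) (sq_nonneg _)

lemma lipschitzOrder_weightOf (hrh : 0 < rh) (hδ : δ ≤ 1) (hband : NSourceBand Λ rh ωh δ)
    (hκ : 0 < nSource Λ rh ωh) :
    LipschitzOrder 𝒰 rh (rh + δ) 2 (weightOf Λ rh ωh) := by
  have hsq : BoundedOrder 𝒰 rh (rh + δ) 0 (fun _ r => r ^ 2) :=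
    BoundedOrder.of_abs_le (M := (rh + 1) ^ 2) (by positivity) fun _ _ r hr => by
      rw [abs_of_nonneg (sq_nonneg r)]
      exact pow_le_pow_left₀ (by linarith [hr.1]) (by linarith [hr.2]) 2
  exact (lipschitzOrder_const (k := 2) _).mul (lipschitzOrder_nOf hrh hδ hband hκ) hsq
    (boundedOrder_nOf hrh hδ hband hκ) (by linarith) le_rfl (by norm_num)

lemma boundedOrder_two_mul_clampRadius (hrh : 0 < rh) (hδ : δ ≤ 1) :
    BoundedOrder 𝒰 rh (rh + δ) 0 (fun _ r => 2 * clampRadius rh r) :=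
  BoundedOrder.of_abs_le (M := 2 * (rh + 1)) (by linarith) fun _ _ r hr => by
    rw [clampRadius_of_le hr.1, abs_of_nonneg (by linarith [hr.1])]
    linarith [hr.2]

lemma boundedOrder_clampRadius_mul_nOf (hrh : 0 < rh) (hδ : δ ≤ 1)
    (hband : NSourceBand Λ rh ωh δ) (hκ : 0 < nSource Λ rh ωh) :
    BoundedOrder 𝒰 rh (rh + δ) 1 (fun u r => 2 * clampRadius rh r * nOf Λ rh ωh u r) :=
  (boundedOrder_two_mul_clampRadius hrh hδ).mul (boundedOrder_nOf hrh hδ hband hκ)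

lemma lipschitzOrder_clampRadius_mul_nOf (hrh : 0 < rh) (hδ : δ ≤ 1)
    (hband : NSourceBand Λ rh ωh δ) (hκ : 0 < nSource Λ rh ωh) :
    LipschitzOrder 𝒰 rh (rh + δ) 2 (fun u r => 2 * clampRadius rh r * nOf Λ rh ωh u r) :=
  (lipschitzOrder_const (k := 2) _).mul (lipschitzOrder_nOf hrh hδ hband hκ)
    (boundedOrder_two_mul_clampRadius hrh hδ) (boundedOrder_nOf hrh hδ hband hκ) (by linarith)
    le_rfl (by norm_num)

lemma boundedOrder_sourceOf (hrh : 0 < rh) (hδ : δ ≤ 1) (hband : NSourceBand Λ rh ωh δ)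
    (hκ : 0 < nSource Λ rh ωh) :
    BoundedOrder 𝒰 rh (rh + δ) 0 (sourceOf Λ rh ωh) :=
  (BoundedOrder.cubic (by positivity) fun u hu r hr => abs_omegaOf_le hδ hu hr).sub
    (((boundedOrder_clampRadius_mul_nOf hrh hδ hband hκ).mul (BoundedOrder.cubic (by positivity)
      fun u hu r _ => abs_le_of_mem_uniformBall hu r)).mono (by linarith) (Nat.zero_le _))

lemma lipschitzOrder_sourceOf (hrh : 0 < rh) (hδ : δ ≤ 1) (hband : NSourceBand Λ rh ωh δ)
    (hκ : 0 < nSource Λ rh ωh) :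
    LipschitzOrder 𝒰 rh (rh + δ) 1 (sourceOf Λ rh ωh) :=
  (lipschitzOrder_omegaOf.cubic fun u hu r hr => abs_omegaOf_le hδ hu hr).sub
    ((lipschitzOrder_clampRadius_mul_nOf hrh hδ hband hκ).mul
      (lipschitzOrder_apply.cubic fun u hu r _ => abs_le_of_mem_uniformBall hu r)
      (boundedOrder_clampRadius_mul_nOf hrh hδ hband hκ)
      (BoundedOrder.cubic (by positivity) fun u hu r _ => abs_le_of_mem_uniformBall hu r)
      (by linarith) le_rfl (by norm_num))

lemma lipschitzOrder_picardMap (hrh : 0 < rh) (hδ : δ ≤ 1) (hband : NSourceBand Λ rh ωh δ)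
    (hκ : 0 < nSource Λ rh ωh) :
    LipschitzOrder 𝒰 rh (rh + δ) 1 (picardMap Λ rh ωh) := by
  obtain ⟨A, hA, hI⟩ := (lipschitzOrder_sourceOf hrh hδ hband hκ).integral
    fun _ hu => continuous_sourceOf hrh hu.1
  obtain ⟨M, hM, hI₂⟩ := (boundedOrder_sourceOf hrh hδ hband hκ).integral
  obtain ⟨L, hL, hZ⟩ := lipschitzOrder_weightOf hrh hδ hband hκ
  obtain ⟨c, hc, hZc⟩ := exists_mul_le_weightOf hrh hδ hband hκ
  refine ⟨A / c + M * L / c ^ 2, by positivity, fun u₁ hu₁ u₂ hu₂ r hr d hd => ?_⟩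
  rcases hr.1.eq_or_lt with rfl | hlt
  · simp [picardMap_of_le]
  rw [picardMap_of_lt hlt, picardMap_of_lt hlt, pow_one]
  exact abs_div_sub_div_le hc (sub_pos.2 hlt) (hZc u₁ hu₁ r hr) (hZc u₂ hu₂ r hr)
    (hI u₁ hu₁ u₂ hu₂ r hr d hd) (by simpa using hI₂ u₂ hu₂ r hr) (hZ u₁ hu₁ u₂ hu₂ r hr d hd)

lemma continuousOn_picardMap (hrh : 0 < rh) (hδ : δ ≤ 1) (hband : NSourceBand Λ rh ωh δ)
    (hκ : 0 < nSource Λ rh ωh) (hu : u ∈ 𝒰) :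
    ContinuousOn (picardMap Λ rh ωh u) (Icc rh (rh + δ)) := by
  obtain ⟨c, hc, hZ⟩ := exists_mul_le_weightOf hrh hδ hband hκ
  intro r hr
  rcases hr.1.eq_or_lt with rfl | hlt
  · exact (continuousWithinAt_picardMap_horizon hrh hκ hu.1).mono Icc_subset_Ici_self
  · exact (continuousAt_picardMap hrh hu.1 hlt
      ((mul_pos hc (sub_pos.2 hlt)).trans_le (hZ u hu r hr)).ne').continuousWithinAt

end Estimates

section Existence

variable {Λ rh ωh : ℝ}

local notation "𝒰" => uniformBall (horizonSlope Λ rh ωh) 1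

lemma exists_nSourceBand (hrh : 0 < rh) (hκ : 0 < nSource Λ rh ωh) :
    ∃ δ, 0 < δ ∧ δ ≤ 1 ∧ NSourceBand Λ rh ωh δ := by
  set B := |horizonSlope Λ rh ωh| + 1
  have hB : 1 ≤ B := le_add_of_nonneg_left (abs_nonneg _)
  have hc : ContinuousAt (fun p : ℝ × ℝ => nSource Λ p.1 p.2) (rh, ωh) := by
    unfold nSource; fun_prop (disch := simp [hrh.ne'])
  obtain ⟨η, hη, h⟩ := Metric.continuousAt_iff.1 hc _ (half_pos hκ)
  set δ := min 1 (η / (2 * B))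
  have hBδ : B * δ ≤ η / 2 :=
    (mul_le_mul_of_nonneg_left (min_le_right _ _) (by positivity)).trans_eq (by field_simp)
  refine ⟨δ, by positivity, min_le_left _ _, fun x hx w hw => ?_⟩
  have hxw : dist (x, w) (rh, ωh) < η := by
    rw [Prod.dist_eq, Real.dist_eq, Real.dist_eq, abs_of_nonneg (by linarith [hx.1])]
    exact max_lt (by nlinarith [hx.2, (by positivity : 0 ≤ δ)]) (by linarith)
  simpa [Real.dist_eq] using (h hxw).le

lemma exists_abs_picardMap_const_sub_le (hrh : 0 < rh) (hκ : 0 < nSource Λ rh ωh) :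
    ∃ η > 0, ∀ r ∈ Icc rh (rh + η),
      |picardMap Λ rh ωh (fun _ => horizonSlope Λ rh ωh) r - horizonSlope Λ rh ωh| ≤ 1 / 2 := by
  obtain ⟨b, hb, hsub⟩ := mem_nhdsGT_iff_exists_Ioo_subset.1 (Metric.tendsto_nhds.1
    (tendsto_picardMap (u := fun _ => horizonSlope Λ rh ωh) hrh hκ continuous_const) _ one_half_pos)
  refine ⟨(b - rh) / 2, by linarith [mem_Ioi.1 hb], fun r hr => ?_⟩
  rcases hr.1.eq_or_lt with rfl | hlt
  · simp [picardMap_of_le]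
  · exact (hsub ⟨hlt, by linarith [hr.2]⟩).le

theorem exists_picardMap_fixedPoint (hrh : 0 < rh) (hκ : 0 < nSource Λ rh ωh) :
    ∃ ε > 0, ∃ v ∈ 𝒰, (∀ r ∈ Icc rh (rh + ε), v r = picardMap Λ rh ωh v r) ∧
      ∀ r ∈ Ioc rh (rh + ε), 0 < nOf Λ rh ωh v r := by
  obtain ⟨δ, hδ, hδ1, hband⟩ := exists_nSourceBand hrh hκ
  obtain ⟨ε₀, hε₀, hT⟩ := (lipschitzOrder_picardMap hrh hδ1 hband hκ).exists_contracting
  obtain ⟨c, hc, hN⟩ := exists_mul_le_nOf hrh hδ1 hband hκ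
  obtain ⟨η, hη, hnear⟩ := exists_abs_picardMap_const_sub_le hrh hκ
  set ε := min (min δ η) ε₀
  have hεδ : ε ≤ δ := (min_le_left _ _).trans (min_le_left _ _)
  have hεη : ε ≤ η := (min_le_left _ _).trans (min_le_right _ _)
  have hsub : Icc rh (rh + ε) ⊆ Icc rh (rh + δ) := Icc_subset_Icc_right (by linarith)
  have hT' := hT ε (min_le_right _ _) (by linarith)
  have hmaps : ∀ u ∈ 𝒰, ∀ r ∈ Icc rh (rh + ε),
      |picardMap Λ rh ωh u r - horizonSlope Λ rh ωh| ≤ 1 := by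
    intro u hu r hr
    have h₁ := hT' u hu _ (const_mem_uniformBall zero_le_one) 1 (fun s _ => hu.2 s) r hr
    have h₂ := hnear r ⟨hr.1, hr.2.trans (by linarith)⟩
    have := abs_sub_le (picardMap Λ rh ωh u r)
      (picardMap Λ rh ωh (fun _ => horizonSlope Λ rh ωh) r) (horizonSlope Λ rh ωh)
    linarith
  have hε : 0 < ε := by positivity
  obtain ⟨v, hv, hfix⟩ := exists_fixedPoint_uniformBall (by linarith) zero_le_one
    (by norm_num) (by norm_num)
    (fun u hu => (continuousOn_picardMap hrh hδ1 hband hκ hu).mono hsub) hmaps hT'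
  refine ⟨ε, hε, v, hv, hfix, fun r hr => ?_⟩
  exact (mul_pos hc (sub_pos.2 hr.1)).trans_le (hN v hv r (hsub (Ioc_subset_Icc_self hr)))

end Existence

section Solution

variable {Λ rh ωh : ℝ} {v : ℝ → ℝ}

lemma deriv_omegaOf (hv : Continuous v) : deriv (omegaOf rh ωh v) = v :=
  funext fun r => (hasDerivAt_omegaOf hv r).deriv

lemma hasDerivAt_of_eventuallyEq_picardMap (hrh : 0 < rh) (hv : Continuous v) {r : ℝ}
    (hr : rh < r) (hZ : weightOf Λ rh ωh v r ≠ 0) (hfix : v =ᶠ[𝓝 r] picardMap Λ rh ωh v) :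
    HasDerivAt v ((sourceOf Λ rh ωh v r - weightDerivOf Λ rh ωh v r * v r) /
      weightOf Λ rh ωh v r) r := by
  have hvr : v r * weightOf Λ rh ωh v r = ∫ s in rh..r, sourceOf Λ rh ωh v s := by
    rw [hfix.eq_of_nhds, picardMap_of_lt hr, div_mul_cancel₀ _ hZ]
  have hd := (hasDerivAt_integral (continuous_sourceOf (Λ := Λ) (ωh := ωh) hrh hv) rh r).div
    (hasDerivAt_weightOf hrh hv r) hZ
  refine (hd.congr_of_eventuallyEq ?_).congr_deriv ?_
  · filter_upwards [hfix, Ioi_mem_nhds hr] with x hx hx' using hx.trans (picardMap_of_lt hx')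
  · rw [← hvr]; field_simp

lemma continuous_massOf (hrh : 0 < rh) (hv : Continuous v) : Continuous (massOf Λ rh ωh v) := by
  have := continuous_nOf (Λ := Λ) (ωh := ωh) hrh hv
  unfold massOf
  fun_prop

lemma deriv_massOf (hrh : 0 < rh) (hv : Continuous v) {r : ℝ} (hr : rh ≤ r) :
    deriv (massOf Λ rh ωh v) r
      = (1 - 2 * massOf Λ rh ωh v r / r - Λ * r ^ 2 / 3) * deriv (omegaOf rh ωh v) r ^ 2
        + (omegaOf rh ωh v r ^ 2 - 1) ^ 2 / (2 * r ^ 2) := by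
  have hr0 : r ≠ 0 := (hrh.trans_le hr).ne'
  have hN := hasDerivAt_nOf (Λ := Λ) (ωh := ωh) hrh hv r
  have hm : HasDerivAt (massOf Λ rh ωh v) (1 / 2 * (1 - Λ * r ^ 2 / 3 - nOf Λ rh ωh v r)
      + r / 2 * (-(Λ * (2 * r) / 3) - (nSource Λ (clampRadius rh r) (omegaOf rh ωh v r)
        - dampingOf rh v r * nOf Λ rh ωh v r))) r := by
    have h := ((hasDerivAt_id' r).div_const 2).fun_mul
      ((((hasDerivAt_pow 2 r).const_mul Λ).div_const 3).const_sub 1 |>.fun_sub hN)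
    exact h.congr_deriv (by norm_num)
  rw [hm.deriv, deriv_omegaOf hv]
  simp only [massOf, nSource, dampingOf, clampRadius_of_le hr]
  field_simp
  ring

lemma hasDerivAt_sOf (hrh : 0 < rh) (hv : Continuous v) (r : ℝ) :
    HasDerivAt (sOf rh v) (sOf rh v r * (2 * v r ^ 2 / clampRadius rh r)) r :=
  (hasDerivAt_integral (continuous_sIntegrand hrh hv) rh r).exp

lemma deriv_sOf (hrh : 0 < rh) (hv : Continuous v) {r : ℝ} (hr : rh ≤ r) :
    deriv (sOf rh v) r = 2 * sOf rh v r * deriv (omegaOf rh ωh v) r ^ 2 / r := by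
  rw [(hasDerivAt_sOf hrh hv r).deriv, deriv_omegaOf hv, clampRadius_of_le hr]
  ring

lemma one_sub_two_mul_massOf_div (r : ℝ) (hr : r ≠ 0) :
    1 - 2 * massOf Λ rh ωh v r / r - Λ * r ^ 2 / 3 = nOf Λ rh ωh v r := by
  unfold massOf; field_simp; ring

lemma fieldEquation_omega (hrh : 0 < rh) (hv : Continuous v) {r : ℝ} (hr : rh < r)
    (hN : 0 < nOf Λ rh ωh v r) (hfix : v =ᶠ[𝓝 r] picardMap Λ rh ωh v) :
    r ^ 2 * (1 - 2 * massOf Λ rh ωh v r / r - Λ * r ^ 2 / 3) * deriv (deriv (omegaOf rh ωh v)) r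
      + (2 * massOf Λ rh ωh v r - 2 * Λ * r ^ 3 / 3 - (omegaOf rh ωh v r ^ 2 - 1) ^ 2 / r)
        * deriv (omegaOf rh ωh v) r
      + (1 - omegaOf rh ωh v r ^ 2) * omegaOf rh ωh v r = 0 := by
  have hr0 : r ≠ 0 := (hrh.trans hr).ne'
  have hZ : weightOf Λ rh ωh v r ≠ 0 := by unfold weightOf; positivity
  rw [deriv_omegaOf hv, (hasDerivAt_of_eventuallyEq_picardMap hrh hv hr hZ hfix).deriv,
    one_sub_two_mul_massOf_div r hr0]
  simp only [sourceOf, weightDerivOf, weightOf, massOf, nSource, dampingOf,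
    clampRadius_of_le hr.le]
  field_simp
  ring

end Solution

section Regularity

variable {Λ rh ωh : ℝ} {v : ℝ → ℝ} {s : Set ℝ}

lemma contDiffOn_clampRadius (hs : s ⊆ Ioi rh) {n : WithTop ℕ∞} :
    ContDiffOn ℝ n (clampRadius rh) s :=
  contDiffOn_id.congr fun _ hx => clampRadius_of_le (hs hx).le

lemma contDiffOn_one_of_eventuallyEq_picardMap (hrh : 0 < rh) (hv : Continuous v)
    (hs : IsOpen s) (hsub : s ⊆ Ioi rh) (hN : ∀ r ∈ s, 0 < nOf Λ rh ωh v r)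
    (hfix : ∀ r ∈ s, v =ᶠ[𝓝 r] picardMap Λ rh ωh v) : ContDiffOn ℝ 1 v s := by
  have hZ : ∀ r ∈ s, weightOf Λ rh ωh v r ≠ 0 := fun r hr => by
    have := hN r hr; have : 0 < r := hrh.trans (hsub hr); unfold weightOf; positivity
  have hv' : ContinuousOn (fun r => (sourceOf Λ rh ωh v r - weightDerivOf Λ rh ωh v r * v r) /
      weightOf Λ rh ωh v r) s :=
    ((continuous_sourceOf hrh hv).sub ((continuous_weightDerivOf hrh hv).mul hv)).continuousOn.div
      (continuous_weightOf hrh hv).continuousOn hZ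
  simpa using contDiffOn_succ_of_hasDerivAt (n := 0) hs (fun r hr =>
    hasDerivAt_of_eventuallyEq_picardMap hrh hv (hsub hr) (hZ r hr) (hfix r hr))
    (contDiffOn_zero.2 hv')

lemma contDiffOn_omegaOf (hv : Continuous v) (hs : IsOpen s) (hv₁ : ContDiffOn ℝ 1 v s) :
    ContDiffOn ℝ 2 (omegaOf rh ωh v) s := by
  simpa [one_add_one_eq_two] using
    contDiffOn_succ_of_hasDerivAt (n := 1) hs (fun r _ => hasDerivAt_omegaOf hv r) hv₁

lemma contDiffOn_nOf (hrh : 0 < rh) (hv : Continuous v) (hs : IsOpen s) (hsub : s ⊆ Ioi rh)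
    (hv₁ : ContDiffOn ℝ 1 v s) : ContDiffOn ℝ 2 (nOf Λ rh ωh v) s := by
  have hω : ContDiffOn ℝ 1 (omegaOf rh ωh v) s := (contDiffOn_omegaOf hv hs hv₁).of_le (by norm_num)
  have hρ : ContDiffOn ℝ 1 (clampRadius rh) s := contDiffOn_clampRadius hsub
  have hρ0 : ∀ r ∈ s, clampRadius rh r ≠ 0 := fun r _ => (clampRadius_pos hrh r).ne'
  have hq : ContDiffOn ℝ 1 (fun r => nSource Λ (clampRadius rh r) (omegaOf rh ωh v r)) s :=
    ((contDiffOn_const.sub (contDiffOn_const.mul (hρ.pow 2))).sub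
      ((((hω.pow 2).sub contDiffOn_const).pow 2).div (hρ.pow 2)
        fun r hr => pow_ne_zero 2 (hρ0 r hr))).div hρ hρ0
  have hp : ContDiffOn ℝ 1 (dampingOf rh v) s :=
    (contDiffOn_const.add (contDiffOn_const.mul (hv₁.pow 2))).div hρ hρ0
  have hN₁ : ContDiffOn ℝ 1 (nOf Λ rh ωh v) s := by
    simpa using contDiffOn_succ_of_hasDerivAt (n := 0) hs (fun r _ => hasDerivAt_nOf hrh hv r)
      (contDiffOn_zero.2 ((continuous_nSource_comp hrh hv).sub
        ((continuous_dampingOf hrh hv).mul (continuous_nOf hrh hv))).continuousOn)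
  simpa [one_add_one_eq_two] using
    contDiffOn_succ_of_hasDerivAt (n := 1) hs (fun r _ => hasDerivAt_nOf hrh hv r)
      (hq.sub (hp.mul hN₁))

lemma contDiffOn_massOf (hrh : 0 < rh) (hv : Continuous v) (hs : IsOpen s) (hsub : s ⊆ Ioi rh)
    (hv₁ : ContDiffOn ℝ 1 v s) : ContDiffOn ℝ 2 (massOf Λ rh ωh v) s :=
  (contDiffOn_id.div_const 2).mul ((contDiffOn_const.sub
    ((contDiffOn_const.mul (contDiffOn_id.pow 2)).div_const 3)).sub
      (contDiffOn_nOf hrh hv hs hsub hv₁))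

lemma contDiffOn_sOf (hrh : 0 < rh) (hv : Continuous v) (hs : IsOpen s) (hsub : s ⊆ Ioi rh)
    (hv₁ : ContDiffOn ℝ 1 v s) : ContDiffOn ℝ 2 (sOf rh v) s := by
  have hS := hasDerivAt_sOf hrh hv
  have hf : ContDiffOn ℝ 1 (fun r => 2 * v r ^ 2 / clampRadius rh r) s :=
    (contDiffOn_const.mul (hv₁.pow 2)).div (contDiffOn_clampRadius hsub)
      fun r _ => (clampRadius_pos hrh r).ne'
  have hS₁ : ContDiffOn ℝ 1 (sOf rh v) s := by
    simpa using contDiffOn_succ_of_hasDerivAt (n := 0) hs (fun r _ => hS r)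
      (contDiffOn_zero.2 ((continuous_of_hasDerivAt hS).mul
        (continuous_sIntegrand hrh hv)).continuousOn)
  simpa [one_add_one_eq_two] using
    contDiffOn_succ_of_hasDerivAt (n := 1) hs (fun r _ => hS r) (hS₁.mul hf)

end Regularity

end

end EYMHorizon

open EYMHorizon in
theorem local_existence_at_horizon_general (Λ rh ωh : ℝ) (hrh : 0 < rh)
    (hreg : (ωh ^ 2 - 1) ^ 2 < rh ^ 2 * (1 - Λ * rh ^ 2)) :
    ∃ ε > 0, ∃ m ω S : ℝ → ℝ,
      ContinuousOn m (Ico rh (rh + ε)) ∧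
      ContinuousOn ω (Ico rh (rh + ε)) ∧
      ContinuousOn S (Ico rh (rh + ε)) ∧
      ContDiffOn ℝ 2 m (Ioo rh (rh + ε)) ∧
      ContDiffOn ℝ 2 ω (Ioo rh (rh + ε)) ∧
      ContDiffOn ℝ 2 S (Ioo rh (rh + ε)) ∧
      (∀ r ∈ Ioo rh (rh + ε),
        deriv m r = (1 - 2 * m r / r - Λ * r ^ 2 / 3) * (deriv ω r) ^ 2
          + (ω r ^ 2 - 1) ^ 2 / (2 * r ^ 2)) ∧
      (∀ r ∈ Ioo rh (rh + ε),
        deriv S r = 2 * S r * (deriv ω r) ^ 2 / r) ∧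
      (∀ r ∈ Ioo rh (rh + ε),
        r ^ 2 * (1 - 2 * m r / r - Λ * r ^ 2 / 3) * deriv (deriv ω) r
          + (2 * m r - 2 * Λ * r ^ 3 / 3 - (ω r ^ 2 - 1) ^ 2 / r) * deriv ω r
          + (1 - ω r ^ 2) * ω r = 0) ∧
      m rh = rh / 2 - Λ * rh ^ 3 / 6 ∧
      ω rh = ωh ∧
      S rh = 1 ∧
      (∀ r ∈ Ioo rh (rh + ε), 0 < 1 - 2 * m r / r - Λ * r ^ 2 / 3) ∧
      HasDerivWithinAt ω
        ((ωh ^ 2 - 1) * ωh / (rh - Λ * rh ^ 3 - (ωh ^ 2 - 1) ^ 2 / rh))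
        (Ici rh) rh := by
  obtain ⟨ε, hε, v, hv, hfix, hN⟩ := exists_picardMap_fixedPoint hrh (nSource_pos hrh hreg)
  have hsub : Ioo rh (rh + ε) ⊆ Ioi rh := fun r hr => hr.1
  have hN' : ∀ r ∈ Ioo rh (rh + ε), 0 < nOf Λ rh ωh v r := fun r hr => hN r (Ioo_subset_Ioc_self hr)
  have hfix' : ∀ r ∈ Ioo rh (rh + ε), v =ᶠ[𝓝 r] picardMap Λ rh ωh v := fun r hr =>
    Filter.mem_of_superset (isOpen_Ioo.mem_nhds hr) fun x hx => hfix x (Ioo_subset_Icc_self hx)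
  have hv₁ := contDiffOn_one_of_eventuallyEq_picardMap hrh hv.1 isOpen_Ioo hsub hN' hfix'
  have hvrh : v rh = horizonSlope Λ rh ωh := by
    rw [hfix rh (left_mem_Icc.2 (by linarith)), picardMap_of_le le_rfl]
  refine ⟨ε, hε, massOf Λ rh ωh v, omegaOf rh ωh v, sOf rh v,
    (continuous_massOf hrh hv.1).continuousOn, (continuous_omegaOf hv.1).continuousOn,
    (continuous_of_hasDerivAt (hasDerivAt_sOf hrh hv.1)).continuousOn,
    contDiffOn_massOf hrh hv.1 isOpen_Ioo hsub hv₁, contDiffOn_omegaOf hv.1 isOpen_Ioo hv₁,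
    contDiffOn_sOf hrh hv.1 isOpen_Ioo hsub hv₁,
    fun r hr => deriv_massOf hrh hv.1 hr.1.le, fun r hr => deriv_sOf hrh hv.1 hr.1.le,
    fun r hr => fieldEquation_omega hrh hv.1 hr.1 (hN' r hr) (hfix' r hr),
    massOf_rh, omegaOf_rh, sOf_rh, fun r hr => ?_, ?_⟩
  · rw [one_sub_two_mul_massOf_div r (hrh.trans hr.1).ne']
    exact hN' r hr
  · simpa [hvrh, horizonSlope] using (hasDerivAt_omegaOf hv.1 rh).hasDerivWithinAt

/-- Local existence at the event horizon (Lemma 1). -/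
theorem local_existence_at_horizon (Λ rh ωh : ℝ) (hΛ : Λ < 0) (hrh : 0 < rh)
    (hreg : (ωh ^ 2 - 1) ^ 2 < rh ^ 2 * (1 - Λ * rh ^ 2)) :
    ∃ ε > 0, ∃ m ω S : ℝ → ℝ,
      ContinuousOn m (Ico rh (rh + ε)) ∧
      ContinuousOn ω (Ico rh (rh + ε)) ∧
      ContinuousOn S (Ico rh (rh + ε)) ∧
      ContDiffOn ℝ 2 m (Ioo rh (rh + ε)) ∧
      ContDiffOn ℝ 2 ω (Ioo rh (rh + ε)) ∧
      ContDiffOn ℝ 2 S (Ioo rh (rh + ε)) ∧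
      (∀ r ∈ Ioo rh (rh + ε),
        deriv m r = (1 - 2 * m r / r - Λ * r ^ 2 / 3) * (deriv ω r) ^ 2
          + (ω r ^ 2 - 1) ^ 2 / (2 * r ^ 2)) ∧
      (∀ r ∈ Ioo rh (rh + ε),
        deriv S r = 2 * S r * (deriv ω r) ^ 2 / r) ∧
      (∀ r ∈ Ioo rh (rh + ε),
        r ^ 2 * (1 - 2 * m r / r - Λ * r ^ 2 / 3) * deriv (deriv ω) r
          + (2 * m r - 2 * Λ * r ^ 3 / 3 - (ω r ^ 2 - 1) ^ 2 / r) * deriv ω r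
          + (1 - ω r ^ 2) * ω r = 0) ∧
      m rh = rh / 2 - Λ * rh ^ 3 / 6 ∧
      ω rh = ωh ∧
      S rh = 1 ∧
      (∀ r ∈ Ioo rh (rh + ε), 0 < 1 - 2 * m r / r - Λ * r ^ 2 / 3) ∧
      HasDerivWithinAt ω
        ((ωh ^ 2 - 1) * ωh / (rh - Λ * rh ^ 3 - (ωh ^ 2 - 1) ^ 2 / rh))
        (Ici rh) rh :=
  local_existence_at_horizon_general Λ rh ωh hrh hreg
end

section
/- Local existence at infinity (Lemma 2): Let Λ < 0 and let M, ω_∞, a ∈ ℝ. Then there exist R > 0 and functions m, ω, S : (R, ∞) → ℝ, twice continuously differentiable, satisfying the field equations (E1)–(E3) on (R, ∞), such that N(r) > 0 for all r > R, m(r) → M, ω(r) → ω_∞, r·(ω(r) − ω_∞) → a, and S(r) → 1 as r → ∞. -/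
/-!
Substitute `z = 1 / r` and use `(ω, dω/dz, m, S)` as functions of `z` as unknowns. The coefficient
`r² N` of `ω''` in (E3) becomes `z⁻² (z² - 2 m z³ - Λ / 3)`, and after multiplying through by the
powers of `z` the system is a first-order ODE `dx/dz = F(z, x)` with `F` smooth wherever
`z² - 2 m z³ - Λ / 3 ≠ 0`. At `z = 0` this quantity is `-Λ / 3 > 0`, so Picard–Lindelöf solves the
system near `z = 0` with data `(ω_∞, a, M, 1)`, and smoothness bootstraps from the equation itself.
Back in `r`, the limits at infinity are the values at `z = 0`, and `r (ω - ω_∞)` is a difference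
quotient of `ω` at `z = 0`, so it tends to `dω/dz (0) = a`.
-/

open Set Filter Topology

section Prod

variable {𝕜 : Type*} [NontriviallyNormedField 𝕜] {E F : Type*} [NormedAddCommGroup E]
  [NormedSpace 𝕜 E] [NormedAddCommGroup F] [NormedSpace 𝕜 F] {f : 𝕜 → E × F} {f' : E × F} {x : 𝕜}

theorem HasDerivAt.fst (h : HasDerivAt f f' x) : HasDerivAt (fun t => (f t).1) f'.1 x :=
  hasFDerivAt_fst.comp_hasDerivAt (f := f) x h

theorem HasDerivAt.snd (h : HasDerivAt f f' x) : HasDerivAt (fun t => (f t).2) f'.2 x :=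
  hasFDerivAt_snd.comp_hasDerivAt (f := f) x h

end Prod

section ODE

variable {E : Type*} [NormedAddCommGroup E] [NormedSpace ℝ E]

theorem exists_hasDerivAt_of_contDiffAt_prod [CompleteSpace E] {g : ℝ × E → E} {t₀ : ℝ} {x₀ : E}
    (hg : ContDiffAt ℝ 1 g (t₀, x₀)) :
    ∃ α : ℝ → E, α t₀ = x₀ ∧ ∃ ε > 0,
      ∀ t ∈ Ioo (t₀ - ε) (t₀ + ε), HasDerivAt α (g (t, α t)) t := by
  have hsuspension : ContDiffAt ℝ 1 (fun p : ℝ × E => ((1 : ℝ), g p)) (t₀, x₀) :=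
    contDiffAt_const.prodMk hg
  obtain ⟨β, hβ₀, ε, hε, hβ⟩ :=
    hsuspension.exists_forall_mem_closedBall_exists_eq_forall_mem_Ioo_hasDerivAt₀ t₀
  have htime : EqOn (fun t => (β t).1) id (Ioo (t₀ - ε) (t₀ + ε)) :=
    isOpen_Ioo.eqOn_of_deriv_eq isPreconnected_Ioo
      (fun t ht => (hβ t ht).fst.differentiableAt.differentiableWithinAt)
      differentiableOn_id
      (fun t ht => by simp [(hβ t ht).fst.deriv])
      (by simp [hε] : t₀ ∈ Ioo (t₀ - ε) (t₀ + ε)) (by simp [hβ₀])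
  refine ⟨fun t => (β t).2, by simp [hβ₀], ε, hε, fun t ht => ?_⟩
  have hβt : β t = (t, (β t).2) := Prod.ext (htime ht) rfl
  simpa [← hβt] using (hβ t ht).snd

theorem contDiffOn_succ_of_hasDerivAt_comp {g : ℝ × E → E} {U : Set (ℝ × E)} {α : ℝ → E}
    {s : Set ℝ} {n : ℕ} (hs : IsOpen s) (hg : ContDiffOn ℝ n g U) (hαU : ∀ t ∈ s, (t, α t) ∈ U)
    (hα : ∀ t ∈ s, HasDerivAt α (g (t, α t)) t) : ContDiffOn ℝ (n + 1) α s := by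
  have hdiff : DifferentiableOn ℝ α s := fun t ht =>
    (hα t ht).differentiableAt.differentiableWithinAt
  suffices ∀ k ≤ n + 1, ContDiffOn ℝ k α s from mod_cast this (n + 1) le_rfl
  intro k hk
  induction k with
  | zero => exact contDiffOn_zero.2 hdiff.continuousOn
  | succ k ih =>
    have hgα : ContDiffOn ℝ k (fun t => g (t, α t)) s :=
      (hg.of_le (by exact_mod_cast Nat.le_of_succ_le_succ hk)).comp
        (contDiffOn_id.prodMk (ih (by omega))) hαU
    rw [Nat.cast_succ, contDiffOn_succ_iff_deriv_of_isOpen hs]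
    exact ⟨hdiff, by simp, hgα.congr fun t ht => (hα t ht).deriv⟩

theorem exists_hasDerivAt_mem_of_contDiffOn [CompleteSpace E] {g : ℝ × E → E}
    {U : Set (ℝ × E)} (hU : IsOpen U) (hg : ContDiffOn ℝ 1 g U) {t₀ : ℝ} {x₀ : E}
    (h₀ : (t₀, x₀) ∈ U) :
    ∃ α : ℝ → E, α t₀ = x₀ ∧ ∃ ε > 0, ∀ t ∈ Ioo (t₀ - ε) (t₀ + ε),
      (t, α t) ∈ U ∧ HasDerivAt α (g (t, α t)) t := by
  obtain ⟨α, hα₀, ε, hε, hα⟩ :=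
    exists_hasDerivAt_of_contDiffAt_prod (hg.contDiffAt (hU.mem_nhds h₀))
  have hsol : ∀ᶠ t in 𝓝 t₀, HasDerivAt α (g (t, α t)) t :=
    eventually_of_mem (Ioo_mem_nhds (by linarith) (by linarith)) hα
  have hcont : ContinuousAt (fun t => (t, α t)) t₀ :=
    continuousAt_id.prodMk (hα t₀ (by simp [hε])).continuousAt
  have hmem : ∀ᶠ t in 𝓝 t₀, (t, α t) ∈ U :=
    hcont.preimage_mem_nhds (by simpa [hα₀] using hU.mem_nhds h₀)
  obtain ⟨δ, hδ, hball⟩ := Metric.eventually_nhds_iff_ball.1 (hmem.and hsol)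
  exact ⟨α, hα₀, δ, hδ, fun t ht => hball t (by rwa [Real.ball_eq_Ioo])⟩

end ODE

section Inversion

theorem HasDerivAt.comp_inv {𝕜 : Type*} [NontriviallyNormedField 𝕜] {f : 𝕜 → 𝕜} {f' r : 𝕜}
    (hf : HasDerivAt f f' r⁻¹) (hr : r ≠ 0) : HasDerivAt (fun s => f s⁻¹) (-(f' / r ^ 2)) r :=
  (hf.comp r (hasDerivAt_inv hr)).congr_deriv (by ring)

theorem inv_mem_Ioo_of_mem_Ioi {ε r : ℝ} (hε : 0 < ε) (hr : r ∈ Ioi ε⁻¹) : r⁻¹ ∈ Ioo (-ε) ε := by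
  have hr₀ : 0 < r := (inv_pos.2 hε).trans hr
  exact ⟨(neg_neg_of_pos hε).trans (inv_pos.2 hr₀), inv_lt_of_inv_lt₀ hε hr⟩

theorem ContDiffOn.comp_inv_Ioi {F : Type*} [NormedAddCommGroup F] [NormedSpace ℝ F]
    {n : WithTop ℕ∞} {f : ℝ → F} {ε : ℝ} (hε : 0 < ε)
    (hf : ContDiffOn ℝ n f (Ioo (-ε) ε)) : ContDiffOn ℝ n (fun r => f r⁻¹) (Ioi ε⁻¹) :=
  hf.comp (contDiffOn_inv ℝ |>.mono fun _ hr => ((inv_pos.2 hε).trans hr).ne')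
    fun _ hr => inv_mem_Ioo_of_mem_Ioi hε hr

theorem ContinuousAt.tendsto_comp_inv_atTop {X : Type*} [TopologicalSpace X] {f : ℝ → X}
    (hf : ContinuousAt f 0) : Tendsto (fun r => f r⁻¹) atTop (𝓝 (f 0)) :=
  hf.tendsto.comp tendsto_inv_atTop_zero

theorem HasDerivAt.tendsto_mul_sub_comp_inv_atTop {f : ℝ → ℝ} {f' : ℝ} (hf : HasDerivAt f f' 0) :
    Tendsto (fun r => r * (f r⁻¹ - f 0)) atTop (𝓝 f') := by
  have hslope := (hasDerivAt_iff_tendsto_slope.1 hf).comp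
    (tendsto_inv_atTop_nhdsGT_zero.mono_right (nhdsWithin_mono 0 fun _ hx => ne_of_gt hx))
  exact hslope.congr fun r => by simp [slope_def_field, mul_comm]

end Inversion

noncomputable section

/-- `z² N(1/z)`, with `μ` the mass at radius `1/z`. -/
def invRadiusDenom (Λ z μ : ℝ) : ℝ := z ^ 2 - 2 * μ * z ^ 3 - Λ / 3

def invRadiusAccel (Λ z u v μ : ℝ) : ℝ :=
  -((2 * z - 6 * μ * z ^ 2 + z ^ 3 * (u ^ 2 - 1) ^ 2) * v + (1 - u ^ 2) * u) / invRadiusDenom Λ z μ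

def invRadiusMassRate (Λ z u v μ : ℝ) : ℝ := -(invRadiusDenom Λ z μ * v ^ 2 + (u ^ 2 - 1) ^ 2 / 2)

def invRadiusLapseRate (z v σ : ℝ) : ℝ := -(2 * σ * z ^ 3 * v ^ 2)

/-- (E1)–(E3) in the variable `z = 1/r`, for the state `(ω, dω/dz, m, S)`. -/
def invRadiusField (Λ : ℝ) (p : ℝ × ℝ × ℝ × ℝ × ℝ) : ℝ × ℝ × ℝ × ℝ :=
  (p.2.2.1, invRadiusAccel Λ p.1 p.2.1 p.2.2.1 p.2.2.2.1,
    invRadiusMassRate Λ p.1 p.2.1 p.2.2.1 p.2.2.2.1, invRadiusLapseRate p.1 p.2.2.1 p.2.2.2.2)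

theorem contDiffOn_invRadiusField (Λ : ℝ) :
    ContDiffOn ℝ 1 (invRadiusField Λ) {p | invRadiusDenom Λ p.1 p.2.2.2.1 ≠ 0} := by
  intro p hp
  refine ContDiffAt.contDiffWithinAt ?_
  unfold invRadiusField invRadiusAccel invRadiusMassRate invRadiusLapseRate invRadiusDenom at *
  fun_prop (disch := exact hp)

structure IsInvRadiusSolution (Λ ε : ℝ) (u v μ σ : ℝ → ℝ) : Prop where
  denom_pos : ∀ z ∈ Ioo (-ε) ε, 0 < invRadiusDenom Λ z (μ z)
  hasDerivAt_u : ∀ z ∈ Ioo (-ε) ε, HasDerivAt u (v z) z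
  hasDerivAt_v : ∀ z ∈ Ioo (-ε) ε, HasDerivAt v (invRadiusAccel Λ z (u z) (v z) (μ z)) z
  hasDerivAt_μ : ∀ z ∈ Ioo (-ε) ε, HasDerivAt μ (invRadiusMassRate Λ z (u z) (v z) (μ z)) z
  hasDerivAt_σ : ∀ z ∈ Ioo (-ε) ε, HasDerivAt σ (invRadiusLapseRate z (v z) (σ z)) z
  contDiffOn_u : ContDiffOn ℝ 2 u (Ioo (-ε) ε)
  contDiffOn_μ : ContDiffOn ℝ 2 μ (Ioo (-ε) ε)
  contDiffOn_σ : ContDiffOn ℝ 2 σ (Ioo (-ε) ε)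

theorem exists_isInvRadiusSolution {Λ : ℝ} (hΛ : Λ < 0) (ω₀ a M : ℝ) :
    ∃ ε > 0, ∃ u v μ σ : ℝ → ℝ, IsInvRadiusSolution Λ ε u v μ σ ∧
      u 0 = ω₀ ∧ v 0 = a ∧ μ 0 = M ∧ σ 0 = 1 := by
  set U := {p : ℝ × ℝ × ℝ × ℝ × ℝ | 0 < invRadiusDenom Λ p.1 p.2.2.2.1}
  have hU : IsOpen U := isOpen_lt continuous_const (by unfold invRadiusDenom; fun_prop)
  have hfield : ContDiffOn ℝ 1 (invRadiusField Λ) U :=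
    (contDiffOn_invRadiusField Λ).mono fun p hp => ne_of_gt hp
  have h₀ : ((0 : ℝ), ω₀, a, M, (1 : ℝ)) ∈ U := by
    simp only [U, mem_ofPred_eq, invRadiusDenom]; linarith
  obtain ⟨α, hα₀, ε, hε, hα⟩ := exists_hasDerivAt_mem_of_contDiffOn hU hfield h₀
  simp only [zero_sub, zero_add] at hα
  have hC2 : ContDiffOn ℝ 2 α (Ioo (-ε) ε) :=
    contDiffOn_succ_of_hasDerivAt_comp (n := 1) isOpen_Ioo hfield (fun t ht => (hα t ht).1)
      fun t ht => (hα t ht).2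
  refine ⟨ε, hε, fun z => (α z).1, fun z => (α z).2.1, fun z => (α z).2.2.1,
    fun z => (α z).2.2.2, ⟨fun z hz => (hα z hz).1, fun z hz => (hα z hz).2.fst,
    fun z hz => (hα z hz).2.snd.fst, fun z hz => (hα z hz).2.snd.snd.fst,
    fun z hz => (hα z hz).2.snd.snd.snd, hC2.fst, hC2.snd.snd.fst, hC2.snd.snd.snd⟩, ?_⟩
  simp [hα₀]

namespace IsInvRadiusSolution

variable {Λ ε r : ℝ} {u v μ σ : ℝ → ℝ}

theorem metric_pos (h : IsInvRadiusSolution Λ ε u v μ σ) (hε : 0 < ε) (hr : r ∈ Ioi ε⁻¹) :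
    0 < 1 - 2 * μ r⁻¹ / r - Λ * r ^ 2 / 3 := by
  have hr₀ : 0 < r := (inv_pos.2 hε).trans hr
  have hD := h.denom_pos _ (inv_mem_Ioo_of_mem_Ioi hε hr)
  have hN : 1 - 2 * μ r⁻¹ / r - Λ * r ^ 2 / 3 = r ^ 2 * invRadiusDenom Λ r⁻¹ (μ r⁻¹) := by
    unfold invRadiusDenom; field_simp
  rw [hN]; positivity

theorem mass_equation (h : IsInvRadiusSolution Λ ε u v μ σ) (hε : 0 < ε) (hr : r ∈ Ioi ε⁻¹) :
    deriv (fun r => μ r⁻¹) r = (1 - 2 * μ r⁻¹ / r - Λ * r ^ 2 / 3) * deriv (fun r => u r⁻¹) r ^ 2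
      + (u r⁻¹ ^ 2 - 1) ^ 2 / (2 * r ^ 2) := by
  have hr₀ : r ≠ 0 := ((inv_pos.2 hε).trans hr).ne'
  have hz := inv_mem_Ioo_of_mem_Ioi hε hr
  rw [((h.hasDerivAt_μ _ hz).comp_inv hr₀).deriv, ((h.hasDerivAt_u _ hz).comp_inv hr₀).deriv]
  unfold invRadiusMassRate invRadiusDenom
  field_simp

theorem lapse_equation (h : IsInvRadiusSolution Λ ε u v μ σ) (hε : 0 < ε) (hr : r ∈ Ioi ε⁻¹) :
    deriv (fun r => σ r⁻¹) r = 2 * σ r⁻¹ * deriv (fun r => u r⁻¹) r ^ 2 / r := by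
  have hr₀ : r ≠ 0 := ((inv_pos.2 hε).trans hr).ne'
  have hz := inv_mem_Ioo_of_mem_Ioi hε hr
  rw [((h.hasDerivAt_σ _ hz).comp_inv hr₀).deriv, ((h.hasDerivAt_u _ hz).comp_inv hr₀).deriv]
  unfold invRadiusLapseRate
  field_simp

theorem yangMills_equation (h : IsInvRadiusSolution Λ ε u v μ σ) (hε : 0 < ε) (hr : r ∈ Ioi ε⁻¹) :
    r ^ 2 * (1 - 2 * μ r⁻¹ / r - Λ * r ^ 2 / 3) * deriv (deriv (fun r => u r⁻¹)) r
      + (2 * μ r⁻¹ - 2 * Λ * r ^ 3 / 3 - (u r⁻¹ ^ 2 - 1) ^ 2 / r) * deriv (fun r => u r⁻¹) r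
      + (1 - u r⁻¹ ^ 2) * u r⁻¹ = 0 := by
  have hr₀ : r ≠ 0 := ((inv_pos.2 hε).trans hr).ne'
  have hz := inv_mem_Ioo_of_mem_Ioi hε hr
  have hderiv : deriv (fun r => u r⁻¹) =ᶠ[𝓝 r] fun s => -(v s⁻¹ / s ^ 2) := by
    filter_upwards [isOpen_Ioi.mem_nhds hr] with s hs
    exact ((h.hasDerivAt_u _ (inv_mem_Ioo_of_mem_Ioi hε hs)).comp_inv
      ((inv_pos.2 hε).trans hs).ne').deriv
  have hv : HasDerivAt (fun s => -(v s⁻¹ / s ^ 2)) _ r :=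
    (((h.hasDerivAt_v _ hz).comp_inv hr₀).div (hasDerivAt_pow 2 r) (pow_ne_zero 2 hr₀)).neg
  rw [hderiv.deriv_eq, hv.deriv, hderiv.eq_of_nhds]
  have hD := (h.denom_pos _ hz).ne'
  have hDA : invRadiusDenom Λ r⁻¹ (μ r⁻¹) * invRadiusAccel Λ r⁻¹ (u r⁻¹) (v r⁻¹) (μ r⁻¹) =
      -((2 * r⁻¹ - 6 * μ r⁻¹ * r⁻¹ ^ 2 + r⁻¹ ^ 3 * (u r⁻¹ ^ 2 - 1) ^ 2) * v r⁻¹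
        + (1 - u r⁻¹ ^ 2) * u r⁻¹) := mul_div_cancel₀ _ hD
  generalize invRadiusAccel Λ r⁻¹ (u r⁻¹) (v r⁻¹) (μ r⁻¹) = A at hDA ⊢
  generalize u r⁻¹ = U at hDA ⊢
  generalize v r⁻¹ = V at hDA ⊢
  generalize μ r⁻¹ = m at hDA ⊢
  unfold invRadiusDenom at hDA
  field_simp at hDA ⊢
  linear_combination hDA
end IsInvRadiusSolution

end

/-- Local existence at infinity (Lemma 2). -/
theorem local_existence_at_infinity (Λ M ω_inf a : ℝ) (hΛ : Λ < 0) :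
    ∃ R > (0 : ℝ), ∃ m ω S : ℝ → ℝ,
      ContDiffOn ℝ 2 m (Ioi R) ∧
      ContDiffOn ℝ 2 ω (Ioi R) ∧
      ContDiffOn ℝ 2 S (Ioi R) ∧
      (∀ r ∈ Ioi R,
        deriv m r = (1 - 2 * m r / r - Λ * r ^ 2 / 3) * (deriv ω r) ^ 2
          + (ω r ^ 2 - 1) ^ 2 / (2 * r ^ 2)) ∧
      (∀ r ∈ Ioi R,
        deriv S r = 2 * S r * (deriv ω r) ^ 2 / r) ∧
      (∀ r ∈ Ioi R,
        r ^ 2 * (1 - 2 * m r / r - Λ * r ^ 2 / 3) * deriv (deriv ω) r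
          + (2 * m r - 2 * Λ * r ^ 3 / 3 - (ω r ^ 2 - 1) ^ 2 / r) * deriv ω r
          + (1 - ω r ^ 2) * ω r = 0) ∧
      (∀ r ∈ Ioi R, 0 < 1 - 2 * m r / r - Λ * r ^ 2 / 3) ∧
      Tendsto m atTop (nhds M) ∧
      Tendsto ω atTop (nhds ω_inf) ∧
      Tendsto (fun r => r * (ω r - ω_inf)) atTop (nhds a) ∧
      Tendsto S atTop (nhds 1) := by
  obtain ⟨ε, hε, u, v, μ, σ, h, hu₀, hv₀, hμ₀, hσ₀⟩ := exists_isInvRadiusSolution hΛ ω_inf a M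
  have h₀ : (0 : ℝ) ∈ Ioo (-ε) ε := ⟨neg_neg_of_pos hε, hε⟩
  refine ⟨ε⁻¹, inv_pos.2 hε, fun r => μ r⁻¹, fun r => u r⁻¹, fun r => σ r⁻¹,
    h.contDiffOn_μ.comp_inv_Ioi hε, h.contDiffOn_u.comp_inv_Ioi hε,
    h.contDiffOn_σ.comp_inv_Ioi hε, fun r hr => h.mass_equation hε hr,
    fun r hr => h.lapse_equation hε hr, fun r hr => h.yangMills_equation hε hr,
    fun r hr => h.metric_pos hε hr, ?_, ?_, ?_, ?_⟩
  · exact hμ₀ ▸ (h.hasDerivAt_μ 0 h₀).continuousAt.tendsto_comp_inv_atTop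
  · exact hu₀ ▸ (h.hasDerivAt_u 0 h₀).continuousAt.tendsto_comp_inv_atTop
  · exact hu₀ ▸ hv₀ ▸ (h.hasDerivAt_u 0 h₀).tendsto_mul_sub_comp_inv_atTop
  · exact hσ₀ ▸ (h.hasDerivAt_σ 0 h₀).continuousAt.tendsto_comp_inv_atTop
end

section
/- Confinement near the centre of the phase plane: Let ω be a solution of ω''(τ) = (ω(τ)² − 1)·ω(τ) on a maximal interval of existence containing 0, with |ω(0)| < 1 and ω'(0)² < (ω(0)² − 1)²/2. Then ω extends to a (twice differentiable) solution on all of ℝ, and |ω(τ)| < 1 and ω'(τ)² ≤ 1/2 for every τ ∈ ℝ. -/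
/-!
The energy `E = ω'²/2 - (ω² - 1)²/4` is conserved, and `E ≥ 0` wherever `ω² = 1`; so an orbit
starting with `E < 0` and `|ω| < 1` stays in the strip `|ω| < 1`, where `ω'² < (ω² - 1)²/2 ≤ 1/2`.
To obtain a global solution, take the flow of the field clamped to the square `[-1, 1]²`: it is
bounded and globally Lipschitz, hence complete. Its conserved quantity, built from antiderivatives
of the clamped components, equals `E + 1/4` on the square and confines the orbit to the open
square, where the clamping has no effect. Uniqueness for the locally Lipschitz field then
identifies this global solution with `ω` on `I`.
-/

open Set Metric NNReal intervalIntegral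

section ODE

variable {E : Type*} [NormedAddCommGroup E] [NormedSpace ℝ E]

theorem exists_forall_abs_lt_hasDerivAt_of_lipschitzWith [CompleteSpace E] {v : E → E}
    {K L : ℝ≥0} (hv : LipschitzWith K v) (hL : ∀ x, ‖v x‖ ≤ L) (x₀ : E) (T : ℝ≥0) :
    ∃ γ : ℝ → E, γ 0 = x₀ ∧ ∀ t : ℝ, |t| < T → HasDerivAt γ (v (γ t)) t := by
  have hpl : IsPicardLindelof (fun _ ↦ v) (tmin := -(T : ℝ)) (tmax := T)
      ⟨0, by simp⟩ x₀ (L * T) 0 L K :=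
    { lipschitzOnWith := fun _ _ ↦ hv.lipschitzOnWith
      continuousOn := fun _ _ ↦ continuousOn_const
      norm_le := fun _ _ x _ ↦ hL x
      mul_max_le := by simp }
  obtain ⟨γ, hγ0, hγ⟩ := hpl.exists_eq_forall_mem_Icc_hasDerivWithinAt₀
  refine ⟨γ, hγ0, fun t ht ↦ ?_⟩
  rw [abs_lt] at ht
  exact (hγ t ⟨ht.1.le, ht.2.le⟩).hasDerivAt (Icc_mem_nhds ht.1 ht.2)

theorem exists_forall_hasDerivAt_of_lipschitzWith_of_norm_le [CompleteSpace E] {v : E → E}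
    {K L : ℝ≥0} (hv : LipschitzWith K v) (hL : ∀ x, ‖v x‖ ≤ L) (x₀ : E) :
    ∃ γ : ℝ → E, γ 0 = x₀ ∧ ∀ t, HasDerivAt γ (v (γ t)) t := by
  choose γ hγ0 hγ using exists_forall_abs_lt_hasDerivAt_of_lipschitzWith hv hL x₀
  have hagree : ∀ S T : ℝ≥0, ∀ s : ℝ, |s| < S → |s| < T → γ S s = γ T s := by
    intro S T s hS hT
    have hmin : |s| < min S T := lt_min hS hT
    refine ODE_solution_unique_of_mem_Ioo (v := fun _ ↦ v) (s := fun _ ↦ univ)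
      (fun _ _ ↦ hv.lipschitzOnWith) (t₀ := 0) ?_ (fun t ht ↦ ⟨hγ S t ?_, trivial⟩)
      (fun t ht ↦ ⟨hγ T t ?_, trivial⟩) ((hγ0 S).trans (hγ0 T).symm) (abs_lt.mp hmin)
    · exact abs_lt.mp (by simpa using (abs_nonneg s).trans_lt hmin)
    · exact (abs_lt.mpr ht).trans_le (by exact_mod_cast min_le_left _ _)
    · exact (abs_lt.mpr ht).trans_le (by exact_mod_cast min_le_right _ _)
  refine ⟨fun t ↦ γ (‖t‖₊ + 1) t, by simpa using hγ0 1, fun t ↦ ?_⟩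
  have hlt : ∀ s : ℝ, |s| < (‖s‖₊ + 1 : ℝ≥0) := fun s ↦ by simp
  have hnhds : {s : ℝ | |s| < (‖t‖₊ + 1 : ℝ≥0)} ∈ nhds t :=
    isOpen_lt continuous_abs continuous_const |>.mem_nhds (hlt t)
  refine (hγ _ t (hlt t)).congr_of_eventuallyEq ?_
  filter_upwards [hnhds] with s hs using hagree _ _ s (hlt s) hs

theorem ContDiff.exists_forall_hasDerivAt_comp [CompleteSpace E] {V r : E → E} {S : Set E}
    {K : ℝ≥0} (hV : ContDiff ℝ 1 V) (hr : LipschitzWith K r) (hS : IsCompact S)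
    (hSc : Convex ℝ S) (hrS : ∀ x, r x ∈ S) (x₀ : E) :
    ∃ γ : ℝ → E, γ 0 = x₀ ∧ ∀ t, HasDerivAt γ (V (r (γ t))) t := by
  obtain ⟨K', hK'⟩ := hV.contDiffOn.exists_lipschitzOnWith one_ne_zero hSc hS
  obtain ⟨L, hL⟩ := hS.exists_bound_of_continuousOn hV.continuous.continuousOn
  exact exists_forall_hasDerivAt_of_lipschitzWith_of_norm_le
    (lipschitzOnWith_univ.mp (hK'.comp hr.lipschitzOnWith fun x _ ↦ hrS x))
    (fun x ↦ (hL _ (hrS x)).trans (Real.le_coe_toNNReal L)) x₀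

theorem LocallyLipschitz.eqOn_uIcc_of_hasDerivAt {v : E → E} (hv : LocallyLipschitz v)
    {f g : ℝ → E} {a b : ℝ} (hf : ∀ t ∈ uIcc a b, HasDerivAt f (v (f t)) t)
    (hg : ∀ t ∈ uIcc a b, HasDerivAt g (v (g t)) t) (ha : f a = g a) :
    EqOn f g (uIcc a b) := by
  set S := f '' uIcc a b ∪ g '' uIcc a b
  have hfc : ContinuousOn f (uIcc a b) := HasDerivAt.continuousOn hf
  have hgc : ContinuousOn g (uIcc a b) := HasDerivAt.continuousOn hg
  obtain ⟨K, hK⟩ := (hv.locallyLipschitzOn (s := S)).exists_lipschitzOnWith_of_compact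
    ((isCompact_uIcc.image_of_continuousOn hfc).union (isCompact_uIcc.image_of_continuousOn hgc))
  have hfS : ∀ t ∈ uIcc a b, f t ∈ S := fun t ht ↦ .inl (mem_image_of_mem f ht)
  have hgS : ∀ t ∈ uIcc a b, g t ∈ S := fun t ht ↦ .inr (mem_image_of_mem g ht)
  rcases le_total a b with hab | hba
  · rw [uIcc_of_le hab] at hfc hgc hf hg hfS hgS ⊢
    exact ODE_solution_unique_of_mem_Icc_right (v := fun _ ↦ v) (fun _ _ ↦ hK)
      hfc (fun t ht ↦ (hf t (Ico_subset_Icc_self ht)).hasDerivWithinAt)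
      (fun t ht ↦ hfS t (Ico_subset_Icc_self ht))
      hgc (fun t ht ↦ (hg t (Ico_subset_Icc_self ht)).hasDerivWithinAt)
      (fun t ht ↦ hgS t (Ico_subset_Icc_self ht)) ha
  · rw [uIcc_of_ge hba] at hfc hgc hf hg hfS hgS ⊢
    exact ODE_solution_unique_of_mem_Icc_left (v := fun _ ↦ v) (fun _ _ ↦ hK)
      hfc (fun t ht ↦ (hf t (Ioc_subset_Icc_self ht)).hasDerivWithinAt)
      (fun t ht ↦ hfS t (Ioc_subset_Icc_self ht))
      hgc (fun t ht ↦ (hg t (Ioc_subset_Icc_self ht)).hasDerivWithinAt)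
      (fun t ht ↦ hgS t (Ioc_subset_Icc_self ht)) ha

theorem LocallyLipschitz.eqOn_of_hasDerivAt {v : E → E} (hv : LocallyLipschitz v)
    {f g : ℝ → E} {I : Set ℝ} (hI : I.OrdConnected) (hf : ∀ t ∈ I, HasDerivAt f (v (f t)) t)
    (hg : ∀ t ∈ I, HasDerivAt g (v (g t)) t) {t₀ : ℝ} (ht₀ : t₀ ∈ I) (heq : f t₀ = g t₀) :
    EqOn f g I := by
  intro t ht
  have hsub := hI.uIcc_subset ht₀ ht
  exact hv.eqOn_uIcc_of_hasDerivAt (fun s hs ↦ hf s (hsub hs)) (fun s hs ↦ hg s (hsub hs)) heq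
    right_mem_uIcc

end ODE

noncomputable section

def unitClamp (u : ℝ) : ℝ := max (-1) (min 1 u)

theorem lipschitzWith_unitClamp : LipschitzWith 1 unitClamp :=
  (LipschitzWith.id.const_min 1).const_max (-1)

theorem abs_unitClamp_le (u : ℝ) : |unitClamp u| ≤ 1 :=
  abs_le.mpr ⟨le_max_left _ _, max_le (by norm_num) (min_le_left _ _)⟩

theorem unitClamp_of_abs_le {u : ℝ} (h : |u| ≤ 1) : unitClamp u = u := by
  rw [abs_le] at h
  rw [unitClamp, min_eq_right h.2, max_eq_right h.1]

theorem unitClamp_eq_self_of_abs_lt {u : ℝ} (h : |unitClamp u| < 1) : unitClamp u = u := by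
  unfold unitClamp at *
  rw [abs_lt] at h
  grind

theorem unitClamp_eq_of_mem_uIcc {u t : ℝ} (ht : t ∈ uIcc (unitClamp u) u) :
    unitClamp t = unitClamp u := by
  unfold unitClamp at *
  rw [mem_uIcc] at ht
  grind

theorem unitClamp_mul_sub_nonneg (u : ℝ) : 0 ≤ unitClamp u * (u - unitClamp u) := by
  unfold unitClamp
  rcases le_total 1 u with h | h
  · rw [min_eq_left h, max_eq_right (by norm_num)]
    linarith
  · rw [min_eq_right h]
    rcases le_total (-1) u with h' | h'
    · simp [max_eq_right h']
    · rw [max_eq_left h']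
      linarith

theorem integral_comp_unitClamp {h : ℝ → ℝ} (hh : Continuous h) (u : ℝ) :
    ∫ t in (0 : ℝ)..u, h (unitClamp t) =
      (∫ t in (0 : ℝ)..unitClamp u, h t) + (u - unitClamp u) * h (unitClamp u) := by
  have hc : Continuous fun t ↦ h (unitClamp t) := hh.comp lipschitzWith_unitClamp.continuous
  rw [← integral_add_adjacent_intervals (hc.intervalIntegrable 0 (unitClamp u))
    (hc.intervalIntegrable _ u)]
  congr 1
  · refine integral_congr fun t ht ↦ congrArg h (unitClamp_of_abs_le ?_)
    have hu := abs_le.mp (abs_unitClamp_le u)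
    exact abs_le.mpr (uIcc_subset_Icc ⟨by norm_num, by norm_num⟩ ⟨hu.1, hu.2⟩ ht)
  · rw [integral_congr fun t ht ↦ congrArg h (unitClamp_eq_of_mem_uIcc ht), integral_const,
      smul_eq_mul]

def phaseField (p : ℝ × ℝ) : ℝ × ℝ := (p.2, (p.1 ^ 2 - 1) * p.1)

theorem contDiff_phaseField : ContDiff ℝ 1 phaseField := by
  unfold phaseField
  fun_prop

def boxClamp : ℝ × ℝ → ℝ × ℝ := Prod.map unitClamp unitClamp

theorem lipschitzWith_boxClamp : LipschitzWith 1 boxClamp := by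
  simpa [boxClamp, Prod.map_def] using (lipschitzWith_unitClamp.comp LipschitzWith.prod_fst).prodMk
    (lipschitzWith_unitClamp.comp LipschitzWith.prod_snd)

theorem boxClamp_mem_closedBall (p : ℝ × ℝ) : boxClamp p ∈ closedBall 0 1 := by
  rw [mem_closedBall_zero_iff, Prod.norm_def]
  exact max_le (abs_unitClamp_le p.1) (abs_unitClamp_le p.2)

theorem boxClamp_eq_self {p : ℝ × ℝ} (h₁ : |p.1| ≤ 1) (h₂ : |p.2| ≤ 1) : boxClamp p = p :=
  Prod.ext (unitClamp_of_abs_le h₁) (unitClamp_of_abs_le h₂)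

def energy (p : ℝ × ℝ) : ℝ := p.2 ^ 2 / 2 - (p.1 ^ 2 - 1) ^ 2 / 4

def truncEnergy (p : ℝ × ℝ) : ℝ :=
  (∫ t in (0 : ℝ)..p.2, unitClamp t) - ∫ t in (0 : ℝ)..p.1, (unitClamp t ^ 2 - 1) * unitClamp t

-- The last two summands are nonnegative, and they vanish on the square `|x|, |y| ≤ 1`.
theorem truncEnergy_eq (p : ℝ × ℝ) :
    truncEnergy p = energy (boxClamp p) + 1 / 4 + unitClamp p.2 * (p.2 - unitClamp p.2)
      + (1 - unitClamp p.1 ^ 2) * (unitClamp p.1 * (p.1 - unitClamp p.1)) := by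
  have hkin := integral_comp_unitClamp continuous_id p.2
  have hpot := integral_comp_unitClamp (h := fun x ↦ (x ^ 2 - 1) * x) (by fun_prop) p.1
  have hquartic (c : ℝ) : ∫ t in (0 : ℝ)..c, (t ^ 2 - 1) * t = c ^ 4 / 4 - c ^ 2 / 2 := by
    have := integral_eq_sub_of_hasDerivAt (a := 0) (b := c)
      (f := fun x ↦ x ^ 4 / 4 - x ^ 2 / 2) (f' := fun x ↦ (x ^ 2 - 1) * x)
      (fun x _ ↦ (((hasDerivAt_pow 4 x).div_const 4).fun_sub
        ((hasDerivAt_pow 2 x).div_const 2)).congr_deriv (by push_cast; ring))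
      (by apply Continuous.intervalIntegrable; fun_prop)
    simpa using this
  simp only [id] at hkin hpot
  rw [truncEnergy, hkin, hpot, integral_id, hquartic, energy]
  simp only [boxClamp, Prod.map]
  ring

theorem truncEnergy_eq_energy {p : ℝ × ℝ} (h₁ : |p.1| ≤ 1) (h₂ : |p.2| ≤ 1) :
    truncEnergy p = energy p + 1 / 4 := by
  have := truncEnergy_eq p
  rwa [boxClamp_eq_self h₁ h₂, unitClamp_of_abs_le h₁, unitClamp_of_abs_le h₂, sub_self, sub_self,
    mul_zero, mul_zero, mul_zero, add_zero, add_zero] at this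

theorem abs_lt_one_of_truncEnergy_lt {p : ℝ × ℝ} (h : truncEnergy p < 1 / 4) :
    |p.1| < 1 ∧ |p.2| < 1 := by
  suffices hc : |unitClamp p.1| < 1 ∧ |unitClamp p.2| < 1 by
    rwa [unitClamp_eq_self_of_abs_lt hc.1, unitClamp_eq_self_of_abs_lt hc.2] at hc
  rw [truncEnergy_eq] at h
  simp only [energy, boxClamp, Prod.map_fst, Prod.map_snd] at h
  have hx := unitClamp_mul_sub_nonneg p.1
  have hy := unitClamp_mul_sub_nonneg p.2
  have hx1 : unitClamp p.1 ^ 2 ≤ 1 := by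
    nlinarith [abs_unitClamp_le p.1, sq_abs (unitClamp p.1), abs_nonneg (unitClamp p.1)]
  have hpot : 0 ≤ (1 - unitClamp p.1 ^ 2) * (unitClamp p.1 * (p.1 - unitClamp p.1)) :=
    mul_nonneg (by linarith) hx
  simp only [← sq_lt_one_iff_abs_lt_one]
  refine ⟨lt_of_le_of_ne hx1 fun hx_eq ↦ ?_, by nlinarith⟩
  rw [hx_eq] at h
  nlinarith [sq_nonneg (unitClamp p.2)]

theorem truncEnergy_eq_of_hasDerivAt {γ : ℝ → ℝ × ℝ}
    (hγ : ∀ t, HasDerivAt γ (phaseField (boxClamp (γ t))) t) (t s : ℝ) :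
    truncEnergy (γ t) = truncEnergy (γ s) := by
  have hkin (y : ℝ) : HasDerivAt (fun y ↦ ∫ t in (0 : ℝ)..y, unitClamp t) (unitClamp y) y :=
    (lipschitzWith_unitClamp.continuous.integral_hasStrictDerivAt 0 y).hasDerivAt
  have hpot (x : ℝ) : HasDerivAt (fun x ↦ ∫ t in (0 : ℝ)..x, (unitClamp t ^ 2 - 1) * unitClamp t)
      ((unitClamp x ^ 2 - 1) * unitClamp x) x := by
    have : Continuous fun t ↦ (unitClamp t ^ 2 - 1) * unitClamp t := by
      have := lipschitzWith_unitClamp.continuous; fun_prop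
    exact (this.integral_hasStrictDerivAt 0 x).hasDerivAt
  have hderiv (t : ℝ) : HasDerivAt (fun t ↦ truncEnergy (γ t)) 0 t := by
    refine (((hkin _).comp t (hγ t).snd).fun_sub ((hpot _).comp t (hγ t).fst)).congr_deriv ?_
    simp only [phaseField, boxClamp, Prod.map_fst, Prod.map_snd]
    ring
  exact is_const_of_deriv_eq_zero (fun t ↦ (hderiv t).differentiableAt)
    (fun t ↦ (hderiv t).deriv) t s

theorem abs_lt_one_and_energy_eq_of_hasDerivAt {γ : ℝ → ℝ × ℝ}
    (hγ : ∀ t, HasDerivAt γ (phaseField (boxClamp (γ t))) t) (h₁ : |(γ 0).1| ≤ 1)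
    (h₂ : |(γ 0).2| ≤ 1) (hE : energy (γ 0) < 0) (t : ℝ) :
    |(γ t).1| < 1 ∧ |(γ t).2| < 1 ∧ energy (γ t) = energy (γ 0) := by
  have hconst : truncEnergy (γ t) = energy (γ 0) + 1 / 4 := by
    rw [truncEnergy_eq_of_hasDerivAt hγ t 0, truncEnergy_eq_energy h₁ h₂]
  obtain ⟨hx, hy⟩ := abs_lt_one_of_truncEnergy_lt (p := γ t) (by linarith)
  exact ⟨hx, hy, by linarith [truncEnergy_eq_energy hx.le hy.le]⟩

theorem sq_snd_lt_of_energy_neg {p : ℝ × ℝ} (h₁ : |p.1| < 1) (h : energy p < 0) :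
    p.2 ^ 2 < 1 / 2 := by
  have := (sq_lt_one_iff_abs_lt_one _).mpr h₁
  rw [energy] at h
  nlinarith [sq_nonneg p.1]

end

theorem phase_plane_confinement_general (I : Set ℝ)
    (hIconv : Convex ℝ I) (h0 : (0 : ℝ) ∈ I)
    (ω ω' : ℝ → ℝ)
    (hω : ∀ τ ∈ I, HasDerivAt ω (ω' τ) τ)
    (hode : ∀ τ ∈ I, HasDerivAt ω' ((ω τ ^ 2 - 1) * ω τ) τ)
    (hinit1 : |ω 0| < 1)
    (hinit2 : (ω' 0) ^ 2 < (ω 0 ^ 2 - 1) ^ 2 / 2) :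
    ∃ Ω Ω' : ℝ → ℝ,
      (∀ τ : ℝ, HasDerivAt Ω (Ω' τ) τ) ∧
      (∀ τ : ℝ, HasDerivAt Ω' ((Ω τ ^ 2 - 1) * Ω τ) τ) ∧
      (∀ τ ∈ I, Ω τ = ω τ) ∧
      (∀ τ : ℝ, |Ω τ| < 1 ∧ (Ω' τ) ^ 2 ≤ 1 / 2) := by
  obtain ⟨γ, hγ0, hγ⟩ := contDiff_phaseField.exists_forall_hasDerivAt_comp
    lipschitzWith_boxClamp (isCompact_closedBall 0 1) (convex_closedBall 0 1)
    boxClamp_mem_closedBall (ω 0, ω' 0)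
  have hω'0 : |ω' 0| ≤ 1 := by
    have := (sq_lt_one_iff_abs_lt_one (ω 0)).mpr hinit1
    rw [← sq_le_one_iff_abs_le_one]
    nlinarith [sq_nonneg (ω 0)]
  have henergy0 : energy (γ 0) < 0 := by
    rw [hγ0, energy]
    linarith
  have hconf := abs_lt_one_and_energy_eq_of_hasDerivAt hγ
    (by rw [hγ0]; exact hinit1.le) (by rwa [hγ0]) henergy0
  have hsol (t : ℝ) : HasDerivAt γ (phaseField (γ t)) t :=
    boxClamp_eq_self (hconf t).1.le (hconf t).2.1.le ▸ hγ t
  have hmatch : EqOn γ (fun τ ↦ (ω τ, ω' τ)) I :=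
    contDiff_phaseField.locallyLipschitz.eqOn_of_hasDerivAt hIconv.ordConnected
      (fun t _ ↦ hsol t) (fun τ hτ ↦ (hω τ hτ).prodMk (hode τ hτ)) h0 hγ0
  refine ⟨fun t ↦ (γ t).1, fun t ↦ (γ t).2, fun t ↦ (hsol t).fst, fun t ↦ (hsol t).snd,
    fun τ hτ ↦ congrArg Prod.fst (hmatch hτ), fun t ↦ ⟨(hconf t).1, ?_⟩⟩
  exact (sq_snd_lt_of_energy_neg (hconf t).1 ((hconf t).2.2.trans_lt henergy0)).le

/-- Confinement near the centre of the phase plane: a solution of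
`ω'' = (ω² - 1)ω` on an open interval containing `0`, whose initial data
satisfy `|ω(0)| < 1` and `ω'(0)² < (ω(0)² - 1)²/2`, extends to a (twice
differentiable) solution on all of `ℝ` satisfying `|ω(τ)| < 1` and
`ω'(τ)² ≤ 1/2` everywhere. -/
theorem phase_plane_confinement (I : Set ℝ) (hIopen : IsOpen I)
    (hIconv : Convex ℝ I) (h0 : (0 : ℝ) ∈ I)
    (ω ω' : ℝ → ℝ)
    (hω : ∀ τ ∈ I, HasDerivAt ω (ω' τ) τ)
    (hode : ∀ τ ∈ I, HasDerivAt ω' ((ω τ ^ 2 - 1) * ω τ) τ)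
    (hinit1 : |ω 0| < 1)
    (hinit2 : (ω' 0) ^ 2 < (ω 0 ^ 2 - 1) ^ 2 / 2) :
    ∃ Ω Ω' : ℝ → ℝ,
      (∀ τ : ℝ, HasDerivAt Ω (Ω' τ) τ) ∧
      (∀ τ : ℝ, HasDerivAt Ω' ((Ω τ ^ 2 - 1) * Ω τ) τ) ∧
      (∀ τ ∈ I, Ω τ = ω τ) ∧
      (∀ τ : ℝ, |Ω τ| < 1 ∧ (Ω' τ) ^ 2 ≤ 1 / 2) :=
  phase_plane_confinement_general I hIconv h0 ω ω' hω hode hinit1 hinit2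
end

section
/- Classification of solutions of the linearized equation at ξ = 0: Let r_h > 0 and let η : (r_h, ∞) → ℝ be differentiable with r·(r_h³ − r³)·η'(r) = (r_h³ + 2r³)·η(r) for all r > r_h. Then there exists a constant A ∈ ℝ such that η(r) = A·r/(r³ − r_h³) for all r > r_h. Consequently, if η is bounded on (r_h, r_h + 1), then η is identically zero on (r_h, ∞). -/
open Set Filter Topology

/-! Multiplying by the integrating factor `(r³ - r_h³)/r` turns the equation into
`(η · (r³ - r_h³)/r)' = 0`, so `η · (r³ - r_h³)/r` is a constant `A` on the connected set
`(r_h, ∞)`. A bounded `η` times a factor vanishing at `r_h` tends to `0` as `r → r_h⁺`,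
which forces `A = 0`. -/

theorem hasDerivAt_mul_integratingFactor_eq_zero {rh r : ℝ} {η : ℝ → ℝ} (hr : r ≠ 0)
    (hη : DifferentiableAt ℝ η r)
    (hode : r * (rh ^ 3 - r ^ 3) * deriv η r = (rh ^ 3 + 2 * r ^ 3) * η r) :
    HasDerivAt (fun r => η r * ((r ^ 3 - rh ^ 3) / r)) 0 r := by
  have hfactor : HasDerivAt (fun r : ℝ => (r ^ 3 - rh ^ 3) / r)
      ((3 * r ^ 2 * r - (r ^ 3 - rh ^ 3) * 1) / r ^ 2) r :=
    (((hasDerivAt_pow 3 r).sub_const _).congr_deriv (by norm_num)).div (hasDerivAt_id r) hr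
  refine (hη.hasDerivAt.mul hfactor).congr_deriv ?_
  field_simp
  linear_combination -hode

theorem exists_mul_integratingFactor_eq_const {rh : ℝ} (hrh : 0 ≤ rh) {η : ℝ → ℝ}
    (hdiff : ∀ r ∈ Ioi rh, DifferentiableAt ℝ η r)
    (hode : ∀ r ∈ Ioi rh, r * (rh ^ 3 - r ^ 3) * deriv η r = (rh ^ 3 + 2 * r ^ 3) * η r) :
    ∃ A, ∀ r ∈ Ioi rh, η r * ((r ^ 3 - rh ^ 3) / r) = A := by
  have hderiv : ∀ r ∈ Ioi rh, HasDerivAt (fun r => η r * ((r ^ 3 - rh ^ 3) / r)) 0 r :=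
    fun r hr => hasDerivAt_mul_integratingFactor_eq_zero (hrh.trans_lt hr).ne' (hdiff r hr)
      (hode r hr)
  exact isOpen_Ioi.exists_is_const_of_deriv_eq_zero isPreconnected_Ioi
    (fun r hr => (hderiv r hr).differentiableAt.differentiableWithinAt)
    (fun r hr => (hderiv r hr).deriv)

theorem tendsto_mul_integratingFactor_nhdsGT {rh : ℝ} (hrh : rh ≠ 0) {η : ℝ → ℝ}
    (hbdd : ∃ C : ℝ, ∀ r ∈ Ioo rh (rh + 1), |η r| ≤ C) :
    Tendsto (fun r => η r * ((r ^ 3 - rh ^ 3) / r)) (𝓝[>] rh) (𝓝 0) := by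
  obtain ⟨C, hC⟩ := hbdd
  have hη : IsBoundedUnder (· ≤ ·) (𝓝[>] rh) (norm ∘ η) :=
    ⟨C, eventually_map.2 <| eventually_of_mem (Ioo_mem_nhdsGT (lt_add_one rh)) hC⟩
  have hfactor : Tendsto (fun r : ℝ => (r ^ 3 - rh ^ 3) / r) (𝓝[>] rh) (𝓝 0) := by
    have hcont : ContinuousAt (fun r : ℝ => (r ^ 3 - rh ^ 3) / r) rh := by
      fun_prop (disch := exact hrh)
    simpa using hcont.tendsto.mono_left nhdsWithin_le_nhds
  exact isBoundedUnder_le_mul_tendsto_zero hη hfactor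

/-- Classification of solutions of the linearized equation at `ξ = 0`:
any differentiable solution of `r(r_h³ - r³)η' = (r_h³ + 2r³)η` on `(r_h, ∞)`
is of the form `η(r) = A·r/(r³ - r_h³)`; consequently, if `η` is bounded near
the horizon, it vanishes identically. -/
theorem linearized_eta_classification (rh : ℝ) (hrh : 0 < rh)
    (η : ℝ → ℝ)
    (hdiff : ∀ r ∈ Ioi rh, DifferentiableAt ℝ η r)
    (hode : ∀ r ∈ Ioi rh, r * (rh ^ 3 - r ^ 3) * deriv η r
      = (rh ^ 3 + 2 * r ^ 3) * η r) :
    (∃ A : ℝ, ∀ r ∈ Ioi rh, η r = A * r / (r ^ 3 - rh ^ 3)) ∧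
    ((∃ C : ℝ, ∀ r ∈ Ioo rh (rh + 1), |η r| ≤ C) →
      ∀ r ∈ Ioi rh, η r = 0) := by
  obtain ⟨A, hA⟩ := exists_mul_integratingFactor_eq_const hrh.le hdiff hode
  have hform : ∀ r ∈ Ioi rh, η r = A * r / (r ^ 3 - rh ^ 3) := by
    intro r hr
    have hr0 : r ≠ 0 := (hrh.trans hr).ne'
    have hden : r ^ 3 - rh ^ 3 ≠ 0 := (sub_pos.2 (pow_lt_pow_left₀ hr hrh.le three_ne_zero)).ne'
    rw [← hA r hr]
    field_simp
  refine ⟨⟨A, hform⟩, fun hbdd r hr => ?_⟩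
  have hA0 : A = 0 := by
    have hconst : Tendsto (fun r => η r * ((r ^ 3 - rh ^ 3) / r)) (𝓝[>] rh) (𝓝 A) :=
      tendsto_const_nhds.congr' (eventually_nhdsWithin_of_forall fun r hr => (hA r hr).symm)
    exact tendsto_nhds_unique hconst (tendsto_mul_integratingFactor_nhdsGT hrh.ne' hbdd)
  simp [hform r hr, hA0]
end
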